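/- arXiv:1406.1594 — 10 statements merged into one kernel-verified Lean document; each statement's English description precedes it below -/
import Mathlib

section
/- Let c be the sequence with c_0 = 1, c_{3n} = c_n, c_{3n+1} = J·c_n, c_{3n+2} = 0 where J = (i√3−1)/2, and let s_n = c_n + c_{n+1}. Then for all n ≥ 0: s_{3n} = −J²·c_n, s_{3n+1} = J·c_n, and s_{3n+2} = c_{n+1}. -/
open Matrix

noncomputable def Hmat (u : ℕ → ℂ) (p n : ℕ) : Matrix (Fin n) (Fin n) ℂ :=
  Matrix.of fun i j => u (p + i + j)

theorem stmt2 (J : ℂ) (hJ : J = (Complex.I * Real.sqrt 3 - 1) / 2)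
    (c : ℕ → ℂ) (hc0 : c 0 = 1)
    (hc3 : ∀ n, c (3 * n) = c n)
    (hc31 : ∀ n, c (3 * n + 1) = J * c n)
    (hc32 : ∀ n, c (3 * n + 2) = 0)
    (s : ℕ → ℂ) (hs : ∀ n, s n = c n + c (n + 1)) :
    ∀ n : ℕ, s (3 * n) = -J ^ 2 * c n ∧ s (3 * n + 1) = J * c n ∧
      s (3 * n + 2) = c (n + 1) := by
  have hsq : (Real.sqrt 3 : ℂ) ^ 2 = 3 := by
    rw [← Complex.ofReal_pow, Real.sq_sqrt (by norm_num : (3:ℝ) ≥ 0)]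
    norm_num
  have hJ2 : 1 + J = -J ^ 2 := by
    subst hJ
    field_simp
    ring_nf
    rw [Complex.I_sq]
    ring_nf
    rw [hsq]
    ring
  intro n
  refine ⟨?_, ?_, ?_⟩
  · rw [hs, hc3, hc31, ← hJ2]; ring
  · rw [hs, show 3*n+1+1 = 3*n+2 by ring, hc31, hc32]; ring
  · rw [hs, show 3*n+2+1 = 3*(n+1) by ring, hc32, hc3]; ring
end

section
/- For any sequence u : ℕ → ℂ, any n ≥ 1 and p ≥ 0, writing H_n^p(u) for the n×n Hankel matrix (u_{p+i+j})_{0≤i,j≤n−1} and K_n^p(u) = (u_{p+3(i+j)})_{0≤i,j≤n−1}, the matrix H_{3n}^p(u) is permutation-similar to the 3×3 block matrix with blocks (K_n^p, K_n^{p+1}, K_n^{p+2}; K_n^{p+1}, K_n^{p+2}, K_n^{p+3}; K_n^{p+2}, K_n^{p+3}, K_n^{p+4}); in particular det H_{3n}^p(u) = ± det of that block matrix, with sign given by the sign of the permutation sorting indices (0,…,3n−1) by residue mod 3. -/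
open Matrix

/-- The 3×3 block matrix with (r,t) block K_n^{p+r+t}(u), where
K_n^q(u) has (a,b) entry u_{q+3(a+b)}. -/
noncomputable def blockK (u : ℕ → ℂ) (p n : ℕ) :
    Matrix (Fin 3 × Fin n) (Fin 3 × Fin n) ℂ :=
  Matrix.of fun x y => u (p + (↑x.1 + ↑y.1) + 3 * (↑x.2 + ↑y.2))

def myEquiv (n : ℕ) : Fin 3 × Fin n ≃ Fin (3 * n) where
  toFun x := ⟨3 * ↑x.2 + ↑x.1, by
    obtain ⟨r, a⟩ := x
    have := r.isLt; have := a.isLt; omega⟩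
  invFun k := (⟨(k : ℕ) % 3, Nat.mod_lt _ (by omega)⟩,
    ⟨(k : ℕ) / 3, by have := k.isLt; omega⟩)
  left_inv := by
    rintro ⟨r, a⟩
    have := r.isLt
    ext <;> simp <;> omega
  right_inv := by
    rintro k
    ext
    simp
    omega

theorem stmt3 (u : ℕ → ℂ) (n p : ℕ) (hn : 1 ≤ n) :
    ∃ e : Fin 3 × Fin n ≃ Fin (3 * n),
      (∀ (r : Fin 3) (a : Fin n), ((e (r, a) : Fin (3 * n)) : ℕ) = 3 * ↑a + ↑r) ∧
      (Hmat u p (3 * n)).submatrix e e = blockK u p n ∧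
      (Hmat u p (3 * n)).det = (blockK u p n).det := by
  refine ⟨myEquiv n, fun r a => rfl, ?_, ?_⟩
  · ext ⟨r, a⟩ ⟨t, b⟩
    simp [Hmat, blockK, myEquiv, Matrix.submatrix]
    ring_nf
  · rw [← Matrix.det_submatrix_equiv_self (myEquiv n) (Hmat u p (3 * n))]
    congr 1
    ext ⟨r, a⟩ ⟨t, b⟩
    simp [Hmat, blockK, myEquiv, Matrix.submatrix]
    ring_nf
end

section
/- Let s_n = c_n + c_{n+1} where c is as above, and K_n^p(s) = (s_{p+3(i+j)})_{0≤i,j≤n−1}. Then K_n^{3p}(s) = −J²·H_n^p(c), K_n^{3p+1}(s) = J·H_n^p(c), and K_n^{3p+2}(s) = H_n^{p+1}(c) for all n ≥ 1, p ≥ 0. -/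
open Matrix

noncomputable def Kmat (u : ℕ → ℂ) (p n : ℕ) : Matrix (Fin n) (Fin n) ℂ :=
  Matrix.of fun i j => u (p + 3 * (↑i + ↑j))

theorem stmt5 (J : ℂ) (hJ : J = (Complex.I * Real.sqrt 3 - 1) / 2)
    (c : ℕ → ℂ) (hc0 : c 0 = 1)
    (hc3 : ∀ n, c (3 * n) = c n)
    (hc31 : ∀ n, c (3 * n + 1) = J * c n)
    (hc32 : ∀ n, c (3 * n + 2) = 0)
    (s : ℕ → ℂ) (hs : ∀ n, s n = c n + c (n + 1)) :
    ∀ n p : ℕ, 1 ≤ n →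
      Kmat s (3 * p) n = (-J ^ 2) • Hmat c p n ∧
      Kmat s (3 * p + 1) n = J • Hmat c p n ∧
      Kmat s (3 * p + 2) n = Hmat c (p + 1) n := by
  have hJ2 : 1 + J = -J ^ 2 := by
    have h3 : (Real.sqrt 3 : ℂ) ^ 2 = 3 := by
      rw [← Complex.ofReal_pow, Real.sq_sqrt (by norm_num : (3:ℝ) ≥ 0)]
      norm_num
    have hI : Complex.I ^ 2 = -1 := Complex.I_sq
    rw [hJ]
    linear_combination (Complex.I ^ 2 / 4) * h3 + (3 / 4 : ℂ) * hI
  intro n p _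
  refine ⟨?_, ?_, ?_⟩ <;> ext i j <;>
    simp only [Kmat, Hmat, Matrix.of_apply, Matrix.smul_apply, smul_eq_mul]
  · have : 3 * p + 3 * (↑i + ↑j) = 3 * (p + i + j) := by ring
    rw [this, hs, hc3, hc31, ← hJ2]; ring
  · have : 3 * p + 1 + 3 * (↑i + ↑j) = 3 * (p + i + j) + 1 := by ring
    rw [this, hs, hc31, hc32]; ring
  · have : 3 * p + 2 + 3 * (↑i + ↑j) = 3 * (p + i + j) + 2 := by ring
    have h2 : 3 * (p + ↑i + ↑j) + 2 + 1 = 3 * (p + 1 + i + j) := by ring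
    rw [this, hs, h2, hc32, hc3]; ring
end

section
/- With |H_n^p| the Hankel determinants of c (c_0=1, c_{3n}=c_n, c_{3n+1}=Jc_n, c_{3n+2}=0, J=(i√3−1)/2) and |Σ_n^p| the Hankel determinants of s_n = c_n+c_{n+1}: for all n ≥ 1 and p ≥ 0, det H_{3n}^{3p} = (−1)^n · det H_n^p · det H_n^{p+1} · det Σ_n^p. -/
/-!
Ordering the rows and columns of `H_{3n}^{3p}` by residue mod 3 splits it into 3 × 3 blocks,
each a Hankel matrix of a decimation `k ↦ c (3k + r)`. By the recursion the block matrix is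
`[[A, J A, 0], [J A, 0, B], [0, B, J B]]` with `A = H_n^p`, `B = H_n^{p+1}`. Since `J³ = 1` it
factors as a block-triangular matrix with diagonal `A`, `-J² (A + B)`, `J B` times a unipotent one,
`(-J²)ⁿ Jⁿ = (-1)ⁿ`, and `Σ_n^p = A + B`.
-/
open Matrix

lemma cubeRoot_pow_three : ((Complex.I * Real.sqrt 3 - 1) / 2 : ℂ) ^ 3 = 1 := by
  have hsqrt : (Real.sqrt 3 : ℂ) ^ 2 = 3 := by
    rw [← Complex.ofReal_pow, Real.sq_sqrt (by norm_num : (0 : ℝ) ≤ 3)]; norm_num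
  ring_nf
  rw [show Complex.I ^ 3 = Complex.I ^ 2 * Complex.I by ring,
    show (Real.sqrt 3 : ℂ) ^ 3 = (Real.sqrt 3 : ℂ) ^ 2 * Real.sqrt 3 by ring, Complex.I_sq, hsqrt]
  ring

noncomputable def residueEquiv (n : ℕ) : Fin n ⊕ Fin n ⊕ Fin n ≃ Fin (3 * n) :=
  Equiv.ofBijective
    (Sum.elim (fun a => ⟨3 * a, by omega⟩)
      (Sum.elim (fun a => ⟨3 * a + 1, by omega⟩) (fun a => ⟨3 * a + 2, by omega⟩)))
    (by
      rw [Fintype.bijective_iff_injective_and_card]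
      refine ⟨?_, by simp; omega⟩
      rintro (a | a | a) (b | b | b) h <;> simp [Fin.ext_iff] at h ⊢ <;> omega)

lemma Hmat_three_mul_submatrix_residueEquiv (u : ℕ → ℂ) (p n : ℕ) :
    let v (r : ℕ) (k : ℕ) := u (3 * k + r)
    (Hmat u (3 * p) (3 * n)).submatrix (residueEquiv n) (residueEquiv n) =
      fromBlocks (Hmat (v 0) p n) (fromCols (Hmat (v 1) p n) (Hmat (v 2) p n))
        (fromRows (Hmat (v 1) p n) (Hmat (v 2) p n))
        (fromBlocks (Hmat (v 2) p n) (Hmat (v 0) (p + 1) n)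
          (Hmat (v 0) (p + 1) n) (Hmat (v 1) (p + 1) n)) := by
  ext (a | a | a) (b | b | b) <;>
    simp only [submatrix_apply, residueEquiv, Equiv.ofBijective_apply, Sum.elim_inl,
      Sum.elim_inr, Hmat, of_apply, fromBlocks_apply₁₁, fromBlocks_apply₁₂,
      fromBlocks_apply₂₁, fromBlocks_apply₂₂, fromCols_apply_inl, fromCols_apply_inr,
      fromRows_apply_inl, fromRows_apply_inr] <;>
    congr 1 <;> ring

lemma Hmat_add_shift (u : ℕ → ℂ) (p n : ℕ) :
    Hmat (fun k => u k + u (k + 1)) p n = Hmat u p n + Hmat u (p + 1) n := by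
  ext i j
  simp only [Hmat, Matrix.add_apply, of_apply]
  ring_nf

lemma det_fromBlocks_of_pow_three_eq_one {R m : Type*} [CommRing R] [Fintype m] [DecidableEq m]
    (A B : Matrix m m R) {ω : R} (hω : ω ^ 3 = 1) :
    (fromBlocks A (fromCols (ω • A) 0) (fromRows (ω • A) 0) (fromBlocks 0 B B (ω • B))).det =
      (-1) ^ Fintype.card m * A.det * B.det * (A + B).det := by
  have hfactor :
      fromBlocks A 0 (fromRows (ω • A) 0) (fromBlocks (-ω ^ 2 • (A + B)) B 0 (ω • B)) *
        fromBlocks 1 (fromCols (ω • 1) 0) 0 (fromBlocks 1 0 (ω ^ 2 • 1) 1) =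
      fromBlocks A (fromCols (ω • A) 0) (fromRows (ω • A) 0) (fromBlocks 0 B B (ω • B)) := by
    rw [fromBlocks_multiply, mul_fromCols, fromRows_mul_fromCols, fromBlocks_multiply]
    ext (i | i | i) (j | j | j) <;>
      simp only [fromBlocks_apply₁₁, fromBlocks_apply₁₂, fromBlocks_apply₂₁, fromBlocks_apply₂₂,
        fromRows_apply_inl, fromRows_apply_inr, fromCols_apply_inl, fromCols_apply_inr,
        Matrix.mul_smul, Matrix.mul_one, Matrix.mul_zero, Matrix.zero_mul, add_zero, zero_add,
        Matrix.add_apply, Matrix.smul_apply, smul_eq_mul, Matrix.zero_apply] <;>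
      first | ring1 | linear_combination (B i j) * hω
  have hsign : (-ω ^ 2) ^ Fintype.card m * ω ^ Fintype.card m = (-1) ^ Fintype.card m := by
    rw [← mul_pow, show -ω ^ 2 * ω = -ω ^ 3 by ring, hω]
  rw [← hfactor, det_mul]
  simp only [det_fromBlocks_zero₁₂, det_fromBlocks_zero₂₁, det_smul, det_one, ← hsign]
  ring

theorem stmt6_general (J : ℂ) (hJ : J = (Complex.I * Real.sqrt 3 - 1) / 2)
    (c : ℕ → ℂ)
    (hc3 : ∀ n, c (3 * n) = c n)
    (hc31 : ∀ n, c (3 * n + 1) = J * c n)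
    (hc32 : ∀ n, c (3 * n + 2) = 0)
    (s : ℕ → ℂ) (hs : ∀ n, s n = c n + c (n + 1)) :
    ∀ n p : ℕ, 1 ≤ n →
      (Hmat c (3 * p) (3 * n)).det =
        (-1) ^ n * (Hmat c p n).det * (Hmat c (p + 1) n).det * (Hmat s p n).det := by
  intro n p _
  have hdecimate0 : (fun k => c (3 * k + 0)) = c := funext hc3
  have hdecimate1 : (fun k => c (3 * k + 1)) = fun k => J * c k := funext hc31
  have hdecimate2 : (fun k => c (3 * k + 2)) = fun _ => 0 := funext hc32
  have hJsmul (q : ℕ) : Hmat (fun k => J * c k) q n = J • Hmat c q n := rfl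
  have hzero : Hmat (fun _ => 0) p n = 0 := rfl
  rw [← det_submatrix_equiv_self (residueEquiv n), Hmat_three_mul_submatrix_residueEquiv]
  simp only [hdecimate0, hdecimate1, hdecimate2, hJsmul, hzero]
  rw [det_fromBlocks_of_pow_three_eq_one _ _ (hJ ▸ cubeRoot_pow_three), Fintype.card_fin,
    funext hs, Hmat_add_shift]

theorem stmt6 (J : ℂ) (hJ : J = (Complex.I * Real.sqrt 3 - 1) / 2)
    (c : ℕ → ℂ) (hc0 : c 0 = 1)
    (hc3 : ∀ n, c (3 * n) = c n)
    (hc31 : ∀ n, c (3 * n + 1) = J * c n)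
    (hc32 : ∀ n, c (3 * n + 2) = 0)
    (s : ℕ → ℂ) (hs : ∀ n, s n = c n + c (n + 1)) :
    ∀ n p : ℕ, 1 ≤ n →
      (Hmat c (3 * p) (3 * n)).det =
        (-1) ^ n * (Hmat c p n).det * (Hmat c (p + 1) n).det * (Hmat s p n).det :=
  stmt6_general J hJ c hc3 hc31 hc32 s hs
end

section
/- For the sequence c above, for all n ≥ 1 and p ≥ 0: det H_{3n+1}^{3p} = (−1)^n · det H_n^{p+1} · det H_{n+1}^p · det Σ_n^p. -/
open Matrix

/-!
Order the rows and columns of `H_{3n+1}^{3p}` by the residue of their index mod 3. Since `c`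
vanishes at indices `≡ 2` and `c (3k+1) = J c k`, this gives the block matrix
`[[A, J A', 0], [J A'', 0, B], [0, B, J B]]` with `A = H_{n+1}^p`, `B = H_n^{p+1}` and `A'`, `A''`
the rectangular truncations of `A`. Unimodular column and row operations, which only use
`J² + J + 1 = 0`, make it block upper triangular with diagonal blocks `A` and
`[[(J+1) H_n^p, Σ_n^p], [B, 0]]`.
-/

namespace Matrix

section BlockDeterminants

variable {R : Type*} [CommRing R] {m : Type*} [Fintype m] [DecidableEq m]

theorem det_fromBlocks_zero_one_one_zero :
    (fromBlocks 0 1 1 0 : Matrix (m ⊕ m) (m ⊕ m) R).det = (-1) ^ Fintype.card m := by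
  have h : (fromBlocks 1 1 0 1 * fromBlocks (-1) 0 1 1 * fromBlocks 1 (-1) 0 1 :
      Matrix (m ⊕ m) (m ⊕ m) R) = fromBlocks 0 1 1 0 := by
    simp [fromBlocks_multiply]
  rw [← h, det_mul, det_mul, det_fromBlocks_zero₂₁, det_fromBlocks_zero₂₁, det_fromBlocks_zero₁₂]
  simp [det_neg]

theorem det_fromBlocks_zero₂₂ (W X Y : Matrix m m R) :
    (fromBlocks W X Y 0).det = (-1) ^ Fintype.card m * X.det * Y.det := by
  have h : fromBlocks X W 0 Y * fromBlocks 0 1 1 0 = fromBlocks W X Y 0 := by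
    simp [fromBlocks_multiply]
  rw [← h, det_mul, det_fromBlocks_zero₂₁, det_fromBlocks_zero_one_one_zero]
  ring

end BlockDeterminants

section Partitioned

variable {R : Type*} [Add R] {m m₁ m₂ n n₁ n₂ : Type*}

theorem fromCols_add_fromCols (A C : Matrix m n₁ R) (B D : Matrix m n₂ R) :
    fromCols A B + fromCols C D = fromCols (A + C) (B + D) := by
  ext i (j | j) <;> rfl

theorem fromRows_add_fromRows (A C : Matrix m₁ n R) (B D : Matrix m₂ n R) :
    fromRows A B + fromRows C D = fromRows (A + C) (B + D) := by
  ext (i | i) j <;> rfl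

end Partitioned

end Matrix

section HankelMatrices

variable {R : Type*} [CommRing R]

def hankel {m k : ℕ} (u : ℕ → R) (p : ℕ) : Matrix (Fin m) (Fin k) R :=
  of fun i j => u (p + i + j)

theorem hankel_add_hankel_succ {m k : ℕ} (u : ℕ → R) (p : ℕ) :
    (hankel u p + hankel u (p + 1) : Matrix (Fin m) (Fin k) R) =
      hankel (fun i => u i + u (i + 1)) p := by
  ext i j
  simp [hankel, add_right_comm _ 1]

theorem hankel_mul_one_submatrix_succ {m n : ℕ} (u : ℕ → R) (p : ℕ) :
    (hankel u p : Matrix (Fin m) (Fin (n + 1)) R) *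
      (1 : Matrix (Fin (n + 1)) (Fin (n + 1)) R).submatrix id Fin.succ = hankel u (p + 1) := by
  ext i j
  simp [hankel, mul_apply, one_apply, add_assoc, add_comm 1]

theorem one_submatrix_castSucc_mul_hankel {n k : ℕ} (u : ℕ → R) (p : ℕ) :
    (1 : Matrix (Fin (n + 1)) (Fin (n + 1)) R).submatrix Fin.castSucc id *
      (hankel u p : Matrix (Fin (n + 1)) (Fin k) R) = hankel u p := by
  ext i j
  simp [hankel, mul_apply, one_apply]

end HankelMatrices

def trisection (n : ℕ) : Fin (n + 1) ⊕ (Fin n ⊕ Fin n) → Fin (3 * n + 1)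
  | .inl a => ⟨3 * a, by omega⟩
  | .inr (.inl b) => ⟨3 * b + 1, by omega⟩
  | .inr (.inr b) => ⟨3 * b + 2, by omega⟩

theorem trisection_bijective (n : ℕ) : Function.Bijective (trisection n) := by
  rw [Fintype.bijective_iff_injective_and_card]
  refine ⟨?_, by simp only [Fintype.card_sum, Fintype.card_fin]; omega⟩
  rintro (a | b | b) (a' | b' | b') h <;> simp only [trisection, Fin.mk.injEq] at h <;>
    first
    | omega
    | simp only [Sum.inl.injEq, Sum.inr.injEq]; omega

noncomputable def trisectionEquiv (n : ℕ) : Fin (n + 1) ⊕ (Fin n ⊕ Fin n) ≃ Fin (3 * n + 1) :=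
  .ofBijective _ (trisection_bijective n)

section TrisectedHankel

variable {R : Type*} [CommRing R] (J : R) (c : ℕ → R) (p n : ℕ)

def trisectedHankel : Matrix (Fin (n + 1) ⊕ (Fin n ⊕ Fin n)) (Fin (n + 1) ⊕ (Fin n ⊕ Fin n)) R :=
  fromBlocks (hankel c p) (fromCols (J • hankel c p) 0) (fromRows (J • hankel c p) 0)
    (fromBlocks 0 (hankel c (p + 1)) (hankel c (p + 1)) (J • hankel c (p + 1)))

def trisectedColReduction :
    Matrix (Fin (n + 1) ⊕ (Fin n ⊕ Fin n)) (Fin (n + 1) ⊕ (Fin n ⊕ Fin n)) R :=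
  fromBlocks 1
    (fromCols 0 ((J + 1) • (1 : Matrix (Fin (n + 1)) (Fin (n + 1)) R).submatrix id Fin.succ))
    0 (fromBlocks 1 (-J • 1) 0 1)

def trisectedRowReduction :
    Matrix (Fin (n + 1) ⊕ (Fin n ⊕ Fin n)) (Fin (n + 1) ⊕ (Fin n ⊕ Fin n)) R :=
  fromBlocks 1 0
    (fromRows (-J • (1 : Matrix (Fin (n + 1)) (Fin (n + 1)) R).submatrix Fin.castSucc id) 0) 1

theorem det_trisectedColReduction : (trisectedColReduction J n).det = 1 := by
  simp [trisectedColReduction, det_fromBlocks_zero₂₁]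

theorem det_trisectedRowReduction : (trisectedRowReduction J n).det = 1 := by
  simp [trisectedRowReduction]

variable {J c}

theorem hankel_submatrix_trisectionEquiv (hc0 : ∀ k, c (3 * k) = c k)
    (hc1 : ∀ k, c (3 * k + 1) = J * c k) (hc2 : ∀ k, c (3 * k + 2) = 0) :
    (hankel c (3 * p)).submatrix (trisectionEquiv n) (trisectionEquiv n) =
      trisectedHankel J c p n := by
  have h0 (m k : ℕ) (h : m = 3 * k) : c m = c k := h ▸ hc0 k
  have h1 (m k : ℕ) (h : m = 3 * k + 1) : c m = J * c k := h ▸ hc1 k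
  have h2 (m : ℕ) (h : m % 3 = 2) : c m = 0 := by rw [← Nat.div_add_mod m 3, h, hc2]
  ext (a | b | b) (a' | b' | b') <;>
    simp only [trisectionEquiv, trisectedHankel, trisection, hankel, Equiv.ofBijective_apply,
      submatrix_apply, of_apply, fromBlocks_apply₁₁, fromBlocks_apply₁₂, fromBlocks_apply₂₁,
      fromBlocks_apply₂₂, fromCols_apply_inl, fromCols_apply_inr, fromRows_apply_inl,
      fromRows_apply_inr, Matrix.smul_apply, smul_eq_mul, Matrix.zero_apply] <;>
    first
    | exact h0 _ _ (by omega)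
    | exact h1 _ _ (by omega)
    | exact h2 _ (by omega)

theorem trisectedHankel_mul_trisectedColReduction (hJ : J ^ 2 + J + 1 = 0) :
    trisectedHankel J c p n * trisectedColReduction J n =
      fromBlocks (hankel c p)
        (fromCols (J • hankel c p) ((J + 1) • hankel (fun i => c i + c (i + 1)) p))
        (fromRows (J • hankel c p) 0) (fromBlocks 0 0 (hankel c (p + 1)) 0) := by
  simp only [trisectedHankel, trisectedColReduction, fromBlocks_multiply, fromRows_mul_fromCols,
    fromCols_mul_fromBlocks]
  simp [mul_fromCols, ← hankel_add_hankel_succ, hankel_mul_one_submatrix_succ, smul_smul,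
    fromCols_add_fromCols, fromBlocks_add, fromCols_ext_iff, fromBlocks_inj]
  constructor
  · linear_combination (norm := module) -hJ • hankel c p
  · linear_combination (norm := module) hJ • hankel c (p + 1)

theorem trisectedRowReduction_mul (hJ : J ^ 2 + J + 1 = 0) :
    trisectedRowReduction J n *
      fromBlocks (hankel c p)
        (fromCols (J • hankel c p) ((J + 1) • hankel (fun i => c i + c (i + 1)) p))
        (fromRows (J • hankel c p) 0) (fromBlocks 0 0 (hankel c (p + 1)) 0) =
      fromBlocks (hankel c p)
        (fromCols (J • hankel c p) ((J + 1) • hankel (fun i => c i + c (i + 1)) p)) 0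
        (fromBlocks ((J + 1) • hankel c p) (hankel (fun i => c i + c (i + 1)) p)
          (hankel c (p + 1)) 0) := by
  simp only [trisectedRowReduction, fromBlocks_multiply, fromRows_mul_fromCols]
  simp [fromRows_mul, one_submatrix_castSucc_mul_hankel, smul_smul, fromRows_add_fromRows,
    fromBlocks_add, fromBlocks_inj]
  constructor
  · linear_combination (norm := module) -hJ • hankel c p
  · linear_combination (norm := module) -hJ • hankel (fun i => c i + c (i + 1)) p

theorem det_trisectedHankel (hJ : J ^ 2 + J + 1 = 0) :
    (trisectedHankel J c p n).det =
      (-1) ^ n * (hankel c (p + 1) : Matrix (Fin n) (Fin n) R).det *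
        (hankel c p : Matrix (Fin (n + 1)) (Fin (n + 1)) R).det *
        (hankel (fun i => c i + c (i + 1)) p : Matrix (Fin n) (Fin n) R).det := by
  have hdet : (trisectedRowReduction J n *
      (trisectedHankel J c p n * trisectedColReduction J n)).det = (trisectedHankel J c p n).det := by
    rw [det_mul, det_mul, det_trisectedRowReduction, det_trisectedColReduction, one_mul, mul_one]
  rw [← hdet, trisectedHankel_mul_trisectedColReduction p n hJ, trisectedRowReduction_mul p n hJ,
    det_fromBlocks_zero₂₁, det_fromBlocks_zero₂₂, Fintype.card_fin]
  ring

theorem det_hankel_three_mul (hJ : J ^ 2 + J + 1 = 0) (hc0 : ∀ k, c (3 * k) = c k)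
    (hc1 : ∀ k, c (3 * k + 1) = J * c k) (hc2 : ∀ k, c (3 * k + 2) = 0) :
    (hankel c (3 * p) : Matrix (Fin (3 * n + 1)) (Fin (3 * n + 1)) R).det =
      (-1) ^ n * (hankel c (p + 1) : Matrix (Fin n) (Fin n) R).det *
        (hankel c p : Matrix (Fin (n + 1)) (Fin (n + 1)) R).det *
        (hankel (fun i => c i + c (i + 1)) p : Matrix (Fin n) (Fin n) R).det := by
  rw [← det_submatrix_equiv_self (trisectionEquiv n),
    hankel_submatrix_trisectionEquiv p n hc0 hc1 hc2, det_trisectedHankel p n hJ]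

end TrisectedHankel

theorem stmt7_general (J : ℂ) (hJ : J = (Complex.I * Real.sqrt 3 - 1) / 2)
    (c : ℕ → ℂ)
    (hc3 : ∀ n, c (3 * n) = c n)
    (hc31 : ∀ n, c (3 * n + 1) = J * c n)
    (hc32 : ∀ n, c (3 * n + 2) = 0)
    (s : ℕ → ℂ) (hs : ∀ n, s n = c n + c (n + 1)) :
    ∀ n p : ℕ, 1 ≤ n →
      (Hmat c (3 * p) (3 * n + 1)).det =
        (-1) ^ n * (Hmat c (p + 1) n).det * (Hmat c p (n + 1)).det * (Hmat s p n).det := by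
  intro n p _
  have hsqrt3 : ((Real.sqrt 3 : ℝ) : ℂ) ^ 2 = 3 := by
    norm_cast
    exact Real.sq_sqrt (by norm_num)
  have hJ_cube_root : J ^ 2 + J + 1 = 0 := by
    rw [hJ]
    linear_combination (Complex.I ^ 2 / 4) * hsqrt3 + (3 / 4 : ℂ) * Complex.I_sq
  obtain rfl : s = fun k => c k + c (k + 1) := funext hs
  exact det_hankel_three_mul p n hJ_cube_root hc3 hc31 hc32

theorem stmt7 (J : ℂ) (hJ : J = (Complex.I * Real.sqrt 3 - 1) / 2)
    (c : ℕ → ℂ) (hc0 : c 0 = 1)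
    (hc3 : ∀ n, c (3 * n) = c n)
    (hc31 : ∀ n, c (3 * n + 1) = J * c n)
    (hc32 : ∀ n, c (3 * n + 2) = 0)
    (s : ℕ → ℂ) (hs : ∀ n, s n = c n + c (n + 1)) :
    ∀ n p : ℕ, 1 ≤ n →
      (Hmat c (3 * p) (3 * n + 1)).det =
        (-1) ^ n * (Hmat c (p + 1) n).det * (Hmat c p (n + 1)).det * (Hmat s p n).det :=
  stmt7_general J hJ c hc3 hc31 hc32 s hs
end

section
/- For the sequence c above, for all n ≥ 1 and p ≥ 0: det H_{3n+2}^{3p} = (−1)^{n+1} · J² · (det H_{n+1}^p)² · det Σ_n^{p+1}. -/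
open Matrix

theorem stmt8 (J : ℂ) (hJ : J = (Complex.I * Real.sqrt 3 - 1) / 2)
    (c : ℕ → ℂ) (hc0 : c 0 = 1)
    (hc3 : ∀ n, c (3 * n) = c n)
    (hc31 : ∀ n, c (3 * n + 1) = J * c n)
    (hc32 : ∀ n, c (3 * n + 2) = 0)
    (s : ℕ → ℂ) (hs : ∀ n, s n = c n + c (n + 1)) :
    ∀ n p : ℕ, 1 ≤ n →
      (Hmat c (3 * p) (3 * n + 2)).det =
        (-1) ^ (n + 1) * J ^ 2 * (Hmat c p (n + 1)).det ^ 2 * (Hmat s (p + 1) n).det := by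
  have hs3 : ((Real.sqrt 3 : ℝ) : ℂ) ^ 2 = 3 := by
    norm_cast
    rw [Real.sq_sqrt] <;> norm_num
  have hI : Complex.I ^ 2 = -1 := Complex.I_sq
  have hJsum : J ^ 2 + J + 1 = 0 := by
    rw [hJ]; linear_combination (Complex.I ^ 2 / 4) * hs3 + (3 / 4) * hI
  have hJ3 : J ^ 3 = 1 := by linear_combination (J - 1) * hJsum
  have hJ0 : J ≠ 0 := by
    intro h; rw [h] at hJ3; norm_num at hJ3
  intro n p _
  -- the reindexing bijection
  set f : Fin (n+1) ⊕ (Fin (n+1) ⊕ Fin n) → Fin (3*n+2) :=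
    Sum.elim (fun a => ⟨3*a, by have := a.isLt; omega⟩)
      (Sum.elim (fun a => ⟨3*a+1, by have := a.isLt; omega⟩)
        (fun a => ⟨3*a+2, by have := a.isLt; omega⟩)) with hf
  have hinj : Function.Injective f := by
    rintro (a|a|a) (b|b|b) h <;>
      simp only [hf, Sum.elim_inl, Sum.elim_inr, Fin.mk.injEq, Sum.inl.injEq,
        Sum.inr.injEq] at h ⊢ <;>
      first
        | (exact Fin.ext (by omega))
        | omega
  have hbij : Function.Bijective f := by
    rw [Fintype.bijective_iff_injective_and_card]
    refine ⟨hinj, ?_⟩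
    simp only [Fintype.card_sum, Fintype.card_fin]
    omega
  set e := Equiv.ofBijective f hbij with he
  -- the blocks
  set A : Matrix (Fin (n+1)) (Fin (n+1)) ℂ := Hmat c p (n+1) with hA
  set B : Matrix (Fin (n+1)) (Fin n) ℂ := Matrix.of (fun a b => c (p+1+a+b)) with hB
  set C : Matrix (Fin n) (Fin (n+1)) ℂ := Matrix.of (fun a b => c (p+1+a+b)) with hC
  set D : Matrix (Fin n) (Fin n) ℂ := Matrix.of (fun a b => c (p+1+a+b)) with hD
  set S : Matrix (Fin n) (Fin n) ℂ := Hmat s (p+1) n with hS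
  set T : Matrix (Fin (n+1)) (Fin (n+1) ⊕ Fin n) ℂ :=
    Matrix.of (fun a bc => Sum.elim (fun b : Fin (n+1) => J * c (p+a+b)) (fun _ => 0) bc)
    with hT
  set T' : Matrix (Fin (n+1) ⊕ Fin n) (Fin (n+1)) ℂ :=
    Matrix.of (fun ac b => Sum.elim (fun a : Fin (n+1) => J * c (p+a+b)) (fun _ => 0) ac)
    with hT'
  set X : Matrix (Fin (n+1) ⊕ Fin n) (Fin (n+1) ⊕ Fin n) ℂ :=
    fromBlocks ((-(J^2)) • A) B C (J • D) with hX
  set Y : Matrix (Fin (n+1) ⊕ Fin n) (Fin (n+1) ⊕ Fin n) ℂ :=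
    fromBlocks A ((-J) • B) C (J • D) with hY
  set M0 : Matrix (Fin (n+1) ⊕ (Fin (n+1) ⊕ Fin n)) (Fin (n+1) ⊕ (Fin (n+1) ⊕ Fin n)) ℂ :=
    fromBlocks A T T' (fromBlocks 0 B C (J • D)) with hM0
  -- step 1 : reindex
  have h1 : (Hmat c (3*p) (3*n+2)).det = M0.det := by
    rw [← Matrix.det_submatrix_equiv_self e]
    congr 1
    ext i j
    rcases i with (a|a|a) <;> rcases j with (b|b|b) <;>
      simp only [hM0, he, hf, Matrix.submatrix_apply, Equiv.ofBijective_apply, Sum.elim_inl,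
        Sum.elim_inr, Hmat, Matrix.of_apply, Matrix.fromBlocks_apply₁₁,
        Matrix.fromBlocks_apply₁₂, Matrix.fromBlocks_apply₂₁, Matrix.fromBlocks_apply₂₂,
        hA, hB, hC, hD, hT, hT', Matrix.smul_apply, Matrix.zero_apply, smul_eq_mul]
    · rw [show 3*p + ↑(⟨3*↑a, by have := a.isLt; omega⟩ : Fin (3*n+2)) +
          ↑(⟨3*↑b, by have := b.isLt; omega⟩ : Fin (3*n+2)) = 3*(p+↑a+↑b) from by simp; ring,
        hc3]
    · rw [show 3*p + ↑(⟨3*↑a, by have := a.isLt; omega⟩ : Fin (3*n+2)) +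
          ↑(⟨3*↑b+1, by have := b.isLt; omega⟩ : Fin (3*n+2)) = 3*(p+↑a+↑b)+1 from by simp; ring,
        hc31]
    · rw [show 3*p + ↑(⟨3*↑a, by have := a.isLt; omega⟩ : Fin (3*n+2)) +
          ↑(⟨3*↑b+2, by have := b.isLt; omega⟩ : Fin (3*n+2)) = 3*(p+↑a+↑b)+2 from by simp; ring,
        hc32]
    · rw [show 3*p + ↑(⟨3*↑a+1, by have := a.isLt; omega⟩ : Fin (3*n+2)) +
          ↑(⟨3*↑b, by have := b.isLt; omega⟩ : Fin (3*n+2)) = 3*(p+↑a+↑b)+1 from by simp; ring,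
        hc31]
    · rw [show 3*p + ↑(⟨3*↑a+1, by have := a.isLt; omega⟩ : Fin (3*n+2)) +
          ↑(⟨3*↑b+1, by have := b.isLt; omega⟩ : Fin (3*n+2)) = 3*(p+↑a+↑b)+2 from by simp; ring,
        hc32]
    · rw [show 3*p + ↑(⟨3*↑a+1, by have := a.isLt; omega⟩ : Fin (3*n+2)) +
          ↑(⟨3*↑b+2, by have := b.isLt; omega⟩ : Fin (3*n+2)) = 3*(p+1+↑a+↑b) from by simp; ring,
        hc3]
    · rw [show 3*p + ↑(⟨3*↑a+2, by have := a.isLt; omega⟩ : Fin (3*n+2)) +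
          ↑(⟨3*↑b, by have := b.isLt; omega⟩ : Fin (3*n+2)) = 3*(p+↑a+↑b)+2 from by simp; ring,
        hc32]
    · rw [show 3*p + ↑(⟨3*↑a+2, by have := a.isLt; omega⟩ : Fin (3*n+2)) +
          ↑(⟨3*↑b+1, by have := b.isLt; omega⟩ : Fin (3*n+2)) = 3*(p+1+↑a+↑b) from by simp; ring,
        hc3]
    · rw [show 3*p + ↑(⟨3*↑a+2, by have := a.isLt; omega⟩ : Fin (3*n+2)) +
          ↑(⟨3*↑b+2, by have := b.isLt; omega⟩ : Fin (3*n+2)) = 3*(p+1+↑a+↑b)+1 from by simp; ring,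
        hc31]
  -- step 2 : first column operation
  set E : Matrix (Fin (n+1)) (Fin (n+1) ⊕ Fin n) ℂ :=
    Matrix.of (fun a bc => Sum.elim (fun b : Fin (n+1) => if a = b then -J else 0)
      (fun _ => 0) bc) with hE
  have hU1 : M0 * (fromBlocks 1 E 0 1) = fromBlocks A 0 T' X := by
    rw [hM0, Matrix.fromBlocks_multiply]
    have e11 : A * 1 + T * (0 : Matrix (Fin (n+1) ⊕ Fin n) (Fin (n+1)) ℂ) = A := by simp
    have e12 : A * E + T * (1 : Matrix (Fin (n+1) ⊕ Fin n) (Fin (n+1) ⊕ Fin n) ℂ) = 0 := by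
      rw [Matrix.mul_one]
      ext a bc
      rcases bc with (b|b) <;>
        simp [Matrix.mul_apply, hE, hT, hA, Hmat, mul_ite, Finset.sum_ite_eq'] <;> ring
    have e21 : T' * (1 : Matrix (Fin (n+1)) (Fin (n+1)) ℂ) + (fromBlocks 0 B C (J • D)) *
        (0 : Matrix (Fin (n+1) ⊕ Fin n) (Fin (n+1)) ℂ) = T' := by simp
    have e22 : T' * E + (fromBlocks 0 B C (J • D)) *
        (1 : Matrix (Fin (n+1) ⊕ Fin n) (Fin (n+1) ⊕ Fin n) ℂ) = X := by
      rw [Matrix.mul_one]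
      ext ac bc
      rcases ac with (a|a) <;> rcases bc with (b|b) <;>
        simp [Matrix.mul_apply, hE, hT', hX, hA, Hmat, Matrix.fromBlocks_apply₁₁,
          Matrix.fromBlocks_apply₁₂, Matrix.fromBlocks_apply₂₁, Matrix.fromBlocks_apply₂₂,
          mul_ite, Finset.sum_ite_eq'] <;> ring
    rw [e11, e12, e21, e22]
  have h2 : M0.det = A.det * X.det := by
    have hd := Matrix.det_mul M0 (fromBlocks (1 : Matrix (Fin (n+1)) (Fin (n+1)) ℂ) E 0 1)
    rw [hU1, Matrix.det_fromBlocks_zero₁₂, Matrix.det_fromBlocks_zero₂₁, Matrix.det_one,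
      Matrix.det_one, one_mul, mul_one] at hd
    exact hd.symm
  -- step 3 : row scaling
  have hL : (fromBlocks ((-J) • (1 : Matrix (Fin (n+1)) (Fin (n+1)) ℂ)) 0 0
      (1 : Matrix (Fin n) (Fin n) ℂ)) * X = Y := by
    rw [hX, hY, Matrix.fromBlocks_multiply]
    have e11 : ((-J) • (1 : Matrix (Fin (n+1)) (Fin (n+1)) ℂ)) * ((-(J^2)) • A) +
        (0 : Matrix (Fin (n+1)) (Fin n) ℂ) * C = A := by
      rw [Matrix.zero_mul, add_zero, Matrix.smul_mul, Matrix.one_mul, smul_smul,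
        show (-J) * (-(J^2)) = J^3 from by ring, hJ3, one_smul]
    have e12 : ((-J) • (1 : Matrix (Fin (n+1)) (Fin (n+1)) ℂ)) * B +
        (0 : Matrix (Fin (n+1)) (Fin n) ℂ) * (J • D) = (-J) • B := by
      rw [Matrix.zero_mul, add_zero, Matrix.smul_mul, Matrix.one_mul]
    have e21 : (0 : Matrix (Fin n) (Fin (n+1)) ℂ) * ((-(J^2)) • A) +
        (1 : Matrix (Fin n) (Fin n) ℂ) * C = C := by simp
    have e22 : (0 : Matrix (Fin n) (Fin (n+1)) ℂ) * B +
        (1 : Matrix (Fin n) (Fin n) ℂ) * (J • D) = J • D := by simp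
    rw [e11, e12, e21, e22]
  -- step 4 : second column operation
  set F : Matrix (Fin (n+1)) (Fin n) ℂ :=
    Matrix.of (fun k b => if k = b.succ then J else 0) with hF
  have hU2 : Y * (fromBlocks 1 F 0 1) = fromBlocks A 0 C (J • S) := by
    rw [hY, Matrix.fromBlocks_multiply]
    have e11 : A * (1 : Matrix (Fin (n+1)) (Fin (n+1)) ℂ) +
        ((-J) • B) * (0 : Matrix (Fin n) (Fin (n+1)) ℂ) = A := by simp
    have e12 : A * F + ((-J) • B) * (1 : Matrix (Fin n) (Fin n) ℂ) = 0 := by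
      rw [Matrix.mul_one]
      ext a b
      simp [Matrix.mul_apply, hF, hA, hB, Hmat, mul_ite, Finset.sum_ite_eq']
      rw [show p + (a:ℕ) + ((b:ℕ)+1) = p+1+(a:ℕ)+(b:ℕ) from by ring]
      ring
    have e21 : C * (1 : Matrix (Fin (n+1)) (Fin (n+1)) ℂ) +
        (J • D) * (0 : Matrix (Fin n) (Fin (n+1)) ℂ) = C := by simp
    have e22 : C * F + (J • D) * (1 : Matrix (Fin n) (Fin n) ℂ) = J • S := by
      rw [Matrix.mul_one]
      ext a b
      simp [Matrix.mul_apply, hF, hC, hD, hS, Hmat, mul_ite, Finset.sum_ite_eq', hs]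
      rw [show p + 1 + (a:ℕ) + ((b:ℕ)+1) = p+1+(a:ℕ)+(b:ℕ)+1 from by ring]
      ring
    rw [e11, e12, e21, e22]
  have h3 : (-J)^(n+1) * X.det = A.det * (J^n * S.det) := by
    have hdL : (fromBlocks ((-J) • (1 : Matrix (Fin (n+1)) (Fin (n+1)) ℂ)) 0 0
        (1 : Matrix (Fin n) (Fin n) ℂ)).det = (-J)^(n+1) := by
      rw [Matrix.det_fromBlocks_zero₂₁, Matrix.det_one, mul_one, Matrix.det_smul,
        Matrix.det_one, mul_one, Fintype.card_fin]
    have hdU2 : (fromBlocks (1 : Matrix (Fin (n+1)) (Fin (n+1)) ℂ) F 0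
        (1 : Matrix (Fin n) (Fin n) ℂ)).det = 1 := by
      rw [Matrix.det_fromBlocks_zero₂₁, Matrix.det_one, Matrix.det_one, one_mul]
    calc (-J)^(n+1) * X.det
        = ((fromBlocks ((-J) • (1 : Matrix (Fin (n+1)) (Fin (n+1)) ℂ)) 0 0
            (1 : Matrix (Fin n) (Fin n) ℂ)) * X).det := by rw [Matrix.det_mul, hdL]
      _ = Y.det := by rw [hL]
      _ = (Y * (fromBlocks 1 F 0 1)).det := by rw [Matrix.det_mul, hdU2, mul_one]
      _ = A.det * (J • S).det := by rw [hU2, Matrix.det_fromBlocks_zero₁₂]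
      _ = A.det * (J^n * S.det) := by rw [Matrix.det_smul, Fintype.card_fin]
  -- combine
  have hne : ((-J)^(n+1)) ≠ 0 := pow_ne_zero _ (neg_ne_zero.mpr hJ0)
  apply mul_left_cancel₀ hne
  rw [h1, h2]
  have hneg : ((-1:ℂ))^(n+1) * (-1)^(n+1) = 1 := by
    rw [← pow_add, ← two_mul, pow_mul]; norm_num
  rw [neg_pow] at h3 ⊢
  calc (-1:ℂ)^(n+1) * J^(n+1) * (A.det * X.det)
      = A.det * ((-1:ℂ)^(n+1) * J^(n+1) * X.det) := by ring
    _ = A.det * (A.det * (J^n * S.det)) := by rw [h3]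
    _ = (-1:ℂ)^(n+1) * J^(n+1) * ((-1)^(n+1) * J^2 * A.det^2 * S.det) := by
        linear_combination (-(A.det^2 * S.det * J^n)) * hneg +
          (-(A.det^2 * S.det * J^n * ((-1:ℂ))^(n+1) * ((-1:ℂ))^(n+1))) * hJ3
end

section
/- For the sequence c above, for all n ≥ 1 and p ≥ 0: det H_{3n}^{3p+1} = (−1)^n · (det H_n^{p+1})² · det Σ_n^p, and det H_{3n+1}^{3p+1} = (−1)^n · J · det H_n^{p+1} · det H_{n+1}^p · det Σ_n^{p+1}. -/
open Matrix

set_option linter.unnecessarySeqFocus false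
set_option linter.unusedTactic false
set_option linter.unreachableTactic false
set_option linter.unusedVariables false
def tri1 (n : ℕ) : Fin (n+1) ⊕ (Fin n ⊕ Fin n) ≃ Fin (3 * n + 1) where
  toFun x := match x with
    | .inl a => ⟨3*a, by omega⟩
    | .inr (.inl a) => ⟨3*a+1, by omega⟩
    | .inr (.inr a) => ⟨3*a+2, by omega⟩
  invFun i := if h0 : i.val % 3 = 0 then .inl ⟨i.val/3, by omega⟩
    else if h1 : i.val % 3 = 1 then .inr (.inl ⟨i.val/3, by omega⟩)
    else .inr (.inr ⟨i.val/3, by omega⟩)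
  left_inv := by
    rintro (a|a|a) <;> dsimp only
    · rw [dif_pos (by omega)]
      exact congrArg Sum.inl (Fin.ext (by simp))
    · rw [dif_neg (by omega), dif_pos (by omega)]
      exact congrArg Sum.inr (congrArg Sum.inl (Fin.ext (by simp; omega)))
    · rw [dif_neg (by omega), dif_neg (by omega)]
      exact congrArg Sum.inr (congrArg Sum.inr (Fin.ext (by simp; omega)))
  right_inv := by
    intro i; dsimp only
    by_cases h0 : i.val % 3 = 0
    · rw [dif_pos h0]; exact Fin.ext (by simp; omega)
    · by_cases h1 : i.val % 3 = 1
      · rw [dif_neg h0, dif_pos h1]; exact Fin.ext (by simp; omega)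
      · rw [dif_neg h0, dif_neg h1]; exact Fin.ext (by simp; omega)


def tri (n : ℕ) : Fin n ⊕ (Fin n ⊕ Fin n) ≃ Fin (3 * n) where
  toFun x := match x with
    | .inl a => ⟨3*a, by omega⟩
    | .inr (.inl a) => ⟨3*a+1, by omega⟩
    | .inr (.inr a) => ⟨3*a+2, by omega⟩
  invFun i := if h0 : i.val % 3 = 0 then .inl ⟨i.val/3, by omega⟩
    else if h1 : i.val % 3 = 1 then .inr (.inl ⟨i.val/3, by omega⟩)
    else .inr (.inr ⟨i.val/3, by omega⟩)
  left_inv := by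
    rintro (a|a|a) <;> dsimp only
    · rw [dif_pos (by omega)]
      exact congrArg Sum.inl (Fin.ext (by simp))
    · rw [dif_neg (by omega), dif_pos (by omega)]
      exact congrArg Sum.inr (congrArg Sum.inl (Fin.ext (by simp; omega)))
    · rw [dif_neg (by omega), dif_neg (by omega)]
      exact congrArg Sum.inr (congrArg Sum.inr (Fin.ext (by simp; omega)))
  right_inv := by
    intro i; dsimp only
    by_cases h0 : i.val % 3 = 0
    · rw [dif_pos h0]; exact Fin.ext (by simp; omega)
    · by_cases h1 : i.val % 3 = 1
      · rw [dif_neg h0, dif_pos h1]; exact Fin.ext (by simp; omega)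
      · rw [dif_neg h0, dif_neg h1]; exact Fin.ext (by simp; omega)

def tau (α β γ : Type*) : β ⊕ (α ⊕ γ) ≃ α ⊕ (β ⊕ γ) where
  toFun := Sum.elim (fun b => .inr (.inl b)) (Sum.elim (fun a => .inl a) (fun c => .inr (.inr c)))
  invFun := Sum.elim (fun a => .inr (.inl a)) (Sum.elim (fun b => .inl b) (fun c => .inr (.inr c)))
  left_inv := by rintro (b|a|c) <;> rfl
  right_inv := by rintro (a|b|c) <;> rfl

open Kronecker in
private def swapTwo : Matrix (Fin 2) (Fin 2) ℂ := !![0,1;1,0]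

def uEq (n : ℕ) : Fin n ⊕ Fin n ≃ Fin 2 × Fin n where
  toFun := Sum.elim (fun a => (0, a)) (fun a => (1, a))
  invFun := fun x => if x.1 = 0 then .inl x.2 else .inr x.2
  left_inv := by rintro (a|a) <;> simp
  right_inv := by rintro ⟨r, a⟩; fin_cases r <;> simp

open Kronecker in
lemma detP (n : ℕ) :
    (fromBlocks (0 : Matrix (Fin n) (Fin n) ℂ) (1 : Matrix (Fin n) (Fin n) ℂ)
      (1 : Matrix (Fin n) (Fin n) ℂ) (0 : Matrix (Fin n) (Fin n) ℂ)).det = (-1)^n := by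
  have h : (fromBlocks (0 : Matrix (Fin n) (Fin n) ℂ) (1 : Matrix (Fin n) (Fin n) ℂ)
      (1 : Matrix (Fin n) (Fin n) ℂ) (0 : Matrix (Fin n) (Fin n) ℂ))
      = (swapTwo ⊗ₖ (1 : Matrix (Fin n) (Fin n) ℂ)).submatrix (uEq n) (uEq n) := by
    ext i j
    rcases i with a|a <;> rcases j with b|b <;>
      simp [uEq, swapTwo, fromBlocks, kroneckerMap_apply, Matrix.one_apply]
  rw [h, det_submatrix_equiv_self, det_kronecker]
  simp [swapTwo, Matrix.det_fin_two]

lemma det_swapblocks (n : ℕ) (X S B : Matrix (Fin n) (Fin n) ℂ) :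
    (fromBlocks X S B 0).det = (-1)^n * (S.det * B.det) := by
  have h : fromBlocks X S B (0 : Matrix (Fin n) (Fin n) ℂ) *
      fromBlocks (0 : Matrix (Fin n) (Fin n) ℂ) (1 : Matrix (Fin n) (Fin n) ℂ)
        (1 : Matrix (Fin n) (Fin n) ℂ) (0 : Matrix (Fin n) (Fin n) ℂ)
      = fromBlocks S X 0 B := by
    rw [fromBlocks_multiply]; simp
  have h2 := congrArg Matrix.det h
  rw [det_mul, detP, det_fromBlocks_zero₂₁] at h2
  have hsign : ((-1:ℂ)^n) * ((-1:ℂ)^n) = 1 := by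
    rw [← pow_add, ← two_mul, pow_mul]; norm_num
  calc (fromBlocks X S B (0:Matrix (Fin n) (Fin n) ℂ)).det
      = (fromBlocks X S B (0:Matrix (Fin n) (Fin n) ℂ)).det * ((-1:ℂ)^n * (-1:ℂ)^n) := by
        rw [hsign, mul_one]
    _ = (-1)^n * (S.det * B.det) := by rw [← mul_assoc, h2]; ring

section evencase
variable (J : ℂ) (c s : ℕ → ℂ) (n p : ℕ)

lemma even_case (hJ3 : J^3 = 1)
    (hc3 : ∀ n, c (3*n) = c n) (hc31 : ∀ n, c (3*n+1) = J * c n) (hc32 : ∀ n, c (3*n+2) = 0)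
    (hs : ∀ n, s n = c n + c (n+1)) :
    (Hmat c (3*p+1) (3*n)).det = (-1)^n * (Hmat c (p+1) n).det^2 * (Hmat s p n).det := by
  classical
  set A := Hmat c p n with hA
  set B := Hmat c (p+1) n with hB
  set S := Hmat s p n with hS
  set G : Matrix (Fin n ⊕ (Fin n ⊕ Fin n)) (Fin n ⊕ (Fin n ⊕ Fin n)) ℂ :=
    (Hmat c (3*p+1) (3*n)).submatrix (tri n) (tri n) with hG
  set G₂ : Matrix (Fin n ⊕ (Fin n ⊕ Fin n)) (Fin n ⊕ (Fin n ⊕ Fin n)) ℂ :=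
    Matrix.of fun i j =>
      match i with
      | .inr (.inr a) => G (.inr (.inr a)) j - J * G (.inr (.inl a)) j
      | i => G i j with hG₂
  set G₃ : Matrix (Fin n ⊕ (Fin n ⊕ Fin n)) (Fin n ⊕ (Fin n ⊕ Fin n)) ℂ :=
    Matrix.of fun i j =>
      match j with
      | .inr (.inr b) => G₂ i (.inr (.inr b)) + J^2 * G₂ i (.inl b)
      | j => G₂ i j with hG₃
  set E : Matrix (Fin n ⊕ (Fin n ⊕ Fin n)) (Fin n ⊕ (Fin n ⊕ Fin n)) ℂ :=
    fromBlocks 1 0 0 (fromBlocks 1 0 (-J • 1) 1) with hE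
  set F : Matrix (Fin n ⊕ (Fin n ⊕ Fin n)) (Fin n ⊕ (Fin n ⊕ Fin n)) ℂ :=
    fromBlocks 1 (Matrix.of fun a j => Sum.elim (fun _ => (0:ℂ)) (fun b => if b = a then J^2 else 0) j) 0 1 with hF
  have hEG : E * G = G₂ := by
    ext i j
    rcases i with a | a | a <;>
      simp [hE, hG₂, Matrix.mul_apply, Fintype.sum_sum_type, Matrix.one_apply,
        ite_mul, zero_mul, Finset.sum_ite_eq, Finset.sum_ite_eq', sub_eq_add_neg, neg_mul] <;> ring
  have hGF : G₂ * F = G₃ := by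
    ext i j
    rcases j with b | b | b <;>
      simp [hF, hG₃, Matrix.mul_apply, Fintype.sum_sum_type, Matrix.one_apply,
        mul_ite, mul_zero, Finset.sum_ite_eq, Finset.sum_ite_eq', mul_comm] <;> ring
  -- block identification after reindexing
  have hM₃ : G₃.submatrix (tau (Fin n) (Fin n) (Fin n)) (tau (Fin n) (Fin n) (Fin n)) =
      fromBlocks B (Matrix.of fun a j => Sum.elim (fun _ => (0:ℂ)) (fun b => J * B a b) j)
        0 (fromBlocks (J • A) S B 0) := by
    ext i j
    rcases i with a | a | a <;> rcases j with b | b | b <;>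
      simp only [hG₃, hG₂, hG, tau, tri, hA, hB, hS, Hmat, Matrix.submatrix_apply,
        Matrix.of_apply, Equiv.coe_fn_mk, Sum.elim_inl, Sum.elim_inr,
        Matrix.fromBlocks_apply₁₁, Matrix.fromBlocks_apply₁₂, Matrix.fromBlocks_apply₂₁,
        Matrix.fromBlocks_apply₂₂, Matrix.smul_apply, smul_eq_mul, Matrix.zero_apply]
    · -- new (0,0) = old (1,1) = B
      rw [show 3*p+1+(3*(a:ℕ)+1)+(3*(b:ℕ)+1) = 3*(p+a+b+1) by ring, hc3]
      congr 1; omega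
    · -- new (0,1)-left = old (1,0) = 0
      rw [show 3*p+1+(3*(a:ℕ)+1)+3*(b:ℕ) = 3*(p+a+b)+2 by ring, hc32]
    · -- new (0,1)-right = old (1,2) = J*B
      rw [show 3*p+1+(3*(a:ℕ)+1)+(3*(b:ℕ)+2) = 3*(p+(a:ℕ)+(b:ℕ)+1)+1 by ring, hc31,
        show 3*p+1+(3*(a:ℕ)+1)+3*(b:ℕ) = 3*(p+a+b)+2 by ring, hc32,
        show p+1+(a:ℕ)+(b:ℕ) = p+(a:ℕ)+(b:ℕ)+1 by ring]
      ring
    · -- new (1,0) = old (0,1) = 0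
      rw [show 3*p+1+3*(a:ℕ)+(3*(b:ℕ)+1) = 3*(p+a+b)+2 by ring, hc32]
    · -- new (1,1) = old (0,0) = J*A
      rw [show 3*p+1+3*(a:ℕ)+3*(b:ℕ) = 3*(p+(a:ℕ)+(b:ℕ))+1 by ring, hc31]
    · -- new (1,2) = old (0,2) = S
      rw [show 3*p+1+3*(a:ℕ)+(3*(b:ℕ)+2) = 3*(p+(a:ℕ)+(b:ℕ)+1) by ring, hc3,
        show 3*p+1+3*(a:ℕ)+3*(b:ℕ) = 3*(p+(a:ℕ)+(b:ℕ))+1 by ring, hc31, hs (p+(a:ℕ)+(b:ℕ)),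
        show p+(a:ℕ)+(b:ℕ)+1 = p+(a:ℕ)+(b:ℕ)+1 by ring]
      have : J^2 * (J * c (p+(a:ℕ)+(b:ℕ))) = c (p+(a:ℕ)+(b:ℕ)) := by
        rw [show J^2 * (J * c (p+(a:ℕ)+(b:ℕ))) = J^3 * c (p+(a:ℕ)+(b:ℕ)) by ring, hJ3, one_mul]
      rw [this]; ring
    · -- new (2,0) = old (2,1) = 0
      rw [show 3*p+1+(3*(a:ℕ)+2)+(3*(b:ℕ)+1) = 3*(p+(a:ℕ)+(b:ℕ)+1)+1 by ring, hc31,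
        show 3*p+1+(3*(a:ℕ)+1)+(3*(b:ℕ)+1) = 3*(p+(a:ℕ)+(b:ℕ)+1) by ring, hc3]
      ring
    · -- new (2,1) = old (2,0) = B
      rw [show 3*p+1+(3*(a:ℕ)+2)+3*(b:ℕ) = 3*(p+(a:ℕ)+(b:ℕ)+1) by ring, hc3,
        show 3*p+1+(3*(a:ℕ)+1)+3*(b:ℕ) = 3*(p+a+b)+2 by ring, hc32,
        show p+1+(a:ℕ)+(b:ℕ) = p+(a:ℕ)+(b:ℕ)+1 by ring]
      ring
    · -- new (2,2) = old (2,2) = 0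
      rw [show 3*p+1+(3*(a:ℕ)+2)+(3*(b:ℕ)+2) = 3*(p+(a:ℕ)+(b:ℕ)+1)+2 by ring, hc32,
        show 3*p+1+(3*(a:ℕ)+1)+(3*(b:ℕ)+2) = 3*(p+(a:ℕ)+(b:ℕ)+1)+1 by ring, hc31,
        show 3*p+1+(3*(a:ℕ)+2)+3*(b:ℕ) = 3*(p+(a:ℕ)+(b:ℕ)+1) by ring, hc3,
        show 3*p+1+(3*(a:ℕ)+1)+3*(b:ℕ) = 3*(p+a+b)+2 by ring, hc32]
      ring
  have hdetE : E.det = 1 := by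
    rw [hE, det_fromBlocks_zero₂₁, det_fromBlocks_zero₁₂]; simp
  have hdetF : F.det = 1 := by
    rw [hF, det_fromBlocks_zero₂₁]; simp
  have h1 : G.det = (Hmat c (3*p+1) (3*n)).det := by
    rw [hG]; exact det_submatrix_equiv_self _ _
  have h2 : G₃.det = G.det := by
    rw [← hGF, ← hEG, det_mul, det_mul, hdetE, hdetF]; ring
  have h3 : G₃.det = B.det * ((-1)^n * (S.det * B.det)) := by
    rw [← det_submatrix_equiv_self (tau (Fin n) (Fin n) (Fin n)) G₃, hM₃,
      det_fromBlocks_zero₂₁, det_swapblocks]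
  rw [← h1, ← h2, h3]; ring
end evencase


section oddcase
variable (J : ℂ) (c s : ℕ → ℂ) (n p : ℕ)

lemma odd_case (hJ3 : J^3 = 1)
    (hc3 : ∀ n, c (3*n) = c n) (hc31 : ∀ n, c (3*n+1) = J * c n) (hc32 : ∀ n, c (3*n+2) = 0)
    (hs : ∀ n, s n = c n + c (n+1)) :
    (Hmat c (3*p+1) (3*n+1)).det =
      (-1)^n * J * (Hmat c (p+1) n).det * (Hmat c p (n+1)).det * (Hmat s (p+1) n).det := by
  classical
  set A := Hmat c p (n+1) with hA
  set B := Hmat c (p+1) n with hB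
  set Sg := Hmat s (p+1) n with hSg
  set S' : Matrix (Fin (n+1)) (Fin n) ℂ := Matrix.of fun a b => s (p + a + b) with hS'
  set B₂₀ : Matrix (Fin n) (Fin (n+1)) ℂ := Matrix.of fun a b => c (p + 1 + a + b) with hB₂₀
  set G : Matrix (Fin (n+1) ⊕ (Fin n ⊕ Fin n)) (Fin (n+1) ⊕ (Fin n ⊕ Fin n)) ℂ :=
    (Hmat c (3*p+1) (3*n+1)).submatrix (tri1 n) (tri1 n) with hG
  set G₂ : Matrix (Fin (n+1) ⊕ (Fin n ⊕ Fin n)) (Fin (n+1) ⊕ (Fin n ⊕ Fin n)) ℂ :=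
    Matrix.of fun i j =>
      match i with
      | .inr (.inr a) => G (.inr (.inr a)) j - J * G (.inr (.inl a)) j
      | i => G i j with hG₂
  set G₃ : Matrix (Fin (n+1) ⊕ (Fin n ⊕ Fin n)) (Fin (n+1) ⊕ (Fin n ⊕ Fin n)) ℂ :=
    Matrix.of fun i j =>
      match j with
      | .inr (.inr b) => G₂ i (.inr (.inr b)) + J^2 * G₂ i (.inl b.castSucc)
      | j => G₂ i j with hG₃
  set E : Matrix (Fin (n+1) ⊕ (Fin n ⊕ Fin n)) (Fin (n+1) ⊕ (Fin n ⊕ Fin n)) ℂ :=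
    fromBlocks 1 0 0 (fromBlocks 1 0 (-J • 1) 1) with hE
  set F : Matrix (Fin (n+1) ⊕ (Fin n ⊕ Fin n)) (Fin (n+1) ⊕ (Fin n ⊕ Fin n)) ℂ :=
    fromBlocks 1 (Matrix.of fun (a : Fin (n+1)) j =>
      Sum.elim (fun _ => (0:ℂ)) (fun (b : Fin n) => if b.castSucc = a then J^2 else 0) j) 0 1 with hF
  have hEG : E * G = G₂ := by
    ext i j
    rcases i with a | a | a <;>
      simp [hE, hG₂, Matrix.mul_apply, Fintype.sum_sum_type, Matrix.one_apply,
        ite_mul, zero_mul, Finset.sum_ite_eq, Finset.sum_ite_eq', sub_eq_add_neg, neg_mul] <;> ring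
  have hGF : G₂ * F = G₃ := by
    ext i j
    rcases j with b | b | b <;>
      simp [hF, hG₃, Matrix.mul_apply, Fintype.sum_sum_type, Matrix.one_apply,
        mul_ite, mul_zero, Finset.sum_ite_eq, Finset.sum_ite_eq', mul_comm] <;> ring
  have hM₃ : G₃.submatrix (tau (Fin (n+1)) (Fin n) (Fin n)) (tau (Fin (n+1)) (Fin n) (Fin n)) =
      fromBlocks B (Matrix.of fun a j => Sum.elim (fun _ => (0:ℂ)) (fun b => J * B a b) j)
        0 (fromBlocks (J • A) S' B₂₀ 0) := by
    ext i j
    rcases i with a | a | a <;> rcases j with b | b | b <;>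
      simp only [hG₃, hG₂, hG, tau, tri1, hA, hB, hS', hB₂₀, Hmat, Matrix.submatrix_apply,
        Matrix.of_apply, Equiv.coe_fn_mk, Sum.elim_inl, Sum.elim_inr, Fin.coe_castSucc,
        Matrix.fromBlocks_apply₁₁, Matrix.fromBlocks_apply₁₂, Matrix.fromBlocks_apply₂₁,
        Matrix.fromBlocks_apply₂₂, Matrix.smul_apply, smul_eq_mul, Matrix.zero_apply]
    · rw [show 3*p+1+(3*(a:ℕ)+1)+(3*(b:ℕ)+1) = 3*(p+(a:ℕ)+(b:ℕ)+1) by ring, hc3]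
      congr 1; omega
    · rw [show 3*p+1+(3*(a:ℕ)+1)+3*(b:ℕ) = 3*(p+a+b)+2 by ring, hc32]
    · rw [show 3*p+1+(3*(a:ℕ)+1)+(3*(b:ℕ)+2) = 3*(p+(a:ℕ)+(b:ℕ)+1)+1 by ring, hc31,
        show 3*p+1+(3*(a:ℕ)+1)+3*(b:ℕ) = 3*(p+a+b)+2 by ring, hc32,
        show p+1+(a:ℕ)+(b:ℕ) = p+(a:ℕ)+(b:ℕ)+1 by ring]
      ring
    · rw [show 3*p+1+3*(a:ℕ)+(3*(b:ℕ)+1) = 3*(p+a+b)+2 by ring, hc32]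
    · rw [show 3*p+1+3*(a:ℕ)+3*(b:ℕ) = 3*(p+(a:ℕ)+(b:ℕ))+1 by ring, hc31]
    · rw [show 3*p+1+3*(a:ℕ)+(3*(b:ℕ)+2) = 3*(p+(a:ℕ)+(b:ℕ)+1) by ring, hc3,
        show 3*p+1+3*(a:ℕ)+3*(b:ℕ) = 3*(p+(a:ℕ)+(b:ℕ))+1 by ring, hc31, hs (p+(a:ℕ)+(b:ℕ))]
      have : J^2 * (J * c (p+(a:ℕ)+(b:ℕ))) = c (p+(a:ℕ)+(b:ℕ)) := by
        rw [show J^2 * (J * c (p+(a:ℕ)+(b:ℕ))) = J^3 * c (p+(a:ℕ)+(b:ℕ)) by ring, hJ3, one_mul]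
      rw [this]; ring
    · rw [show 3*p+1+(3*(a:ℕ)+2)+(3*(b:ℕ)+1) = 3*(p+(a:ℕ)+(b:ℕ)+1)+1 by ring, hc31,
        show 3*p+1+(3*(a:ℕ)+1)+(3*(b:ℕ)+1) = 3*(p+(a:ℕ)+(b:ℕ)+1) by ring, hc3]
      ring
    · rw [show 3*p+1+(3*(a:ℕ)+2)+3*(b:ℕ) = 3*(p+(a:ℕ)+(b:ℕ)+1) by ring, hc3,
        show 3*p+1+(3*(a:ℕ)+1)+3*(b:ℕ) = 3*(p+a+b)+2 by ring, hc32,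
        show p+1+(a:ℕ)+(b:ℕ) = p+(a:ℕ)+(b:ℕ)+1 by ring]
      ring
    · rw [show 3*p+1+(3*(a:ℕ)+2)+(3*(b:ℕ)+2) = 3*(p+(a:ℕ)+(b:ℕ)+1)+2 by ring, hc32,
        show 3*p+1+(3*(a:ℕ)+1)+(3*(b:ℕ)+2) = 3*(p+(a:ℕ)+(b:ℕ)+1)+1 by ring, hc31,
        show 3*p+1+(3*(a:ℕ)+2)+3*(b:ℕ) = 3*(p+(a:ℕ)+(b:ℕ)+1) by ring, hc3,
        show 3*p+1+(3*(a:ℕ)+1)+3*(b:ℕ) = 3*(p+a+b)+2 by ring, hc32]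
      ring
  -- step 4 : clean up W
  set W : Matrix (Fin (n+1) ⊕ Fin n) (Fin (n+1) ⊕ Fin n) ℂ := fromBlocks (J • A) S' B₂₀ 0 with hW
  set F₂ : Matrix (Fin (n+1) ⊕ Fin n) (Fin (n+1) ⊕ Fin n) ℂ :=
    fromBlocks 1 (Matrix.of fun (k : Fin (n+1)) (b : Fin n) =>
      -(J^2) * ((if k = b.castSucc then (1:ℂ) else 0) + (if k = b.succ then 1 else 0))) 0 1 with hF₂
  have hWF : W * F₂ = fromBlocks (J • A) 0 B₂₀ (-(J^2) • Sg) := by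
    ext i j
    rcases i with a | a <;> rcases j with b | b <;>
      simp [hW, hF₂, hA, hB₂₀, hS', hSg, Hmat, Matrix.mul_apply, Fintype.sum_sum_type,
        Matrix.one_apply, mul_ite, mul_zero, ite_mul, zero_mul, mul_add,
        Finset.sum_add_distrib, Finset.sum_ite_eq, Finset.sum_ite_eq', hs, Fin.coe_castSucc,
        Fin.val_succ]
    · rw [show p+(a:ℕ)+((b:ℕ)+1) = p+(a:ℕ)+(b:ℕ)+1 by ring]
      have h3 : J * c (p+(a:ℕ)+(b:ℕ)) * J^2 = c (p+(a:ℕ)+(b:ℕ)) := by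
        rw [show J * c (p+(a:ℕ)+(b:ℕ)) * J^2 = J^3 * c (p+(a:ℕ)+(b:ℕ)) by ring, hJ3, one_mul]
      have h4 : J * c (p+(a:ℕ)+(b:ℕ)+1) * J^2 = c (p+(a:ℕ)+(b:ℕ)+1) := by
        rw [show J * c (p+(a:ℕ)+(b:ℕ)+1) * J^2 = J^3 * c (p+(a:ℕ)+(b:ℕ)+1) by ring, hJ3, one_mul]
      linear_combination -h3 - h4
    · rw [show p+1+(a:ℕ)+((b:ℕ)+1) = p+1+(a:ℕ)+(b:ℕ)+1 by ring]
      ring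
  have hdetE : E.det = 1 := by
    rw [hE, det_fromBlocks_zero₂₁, det_fromBlocks_zero₁₂]; simp
  have hdetF : F.det = 1 := by
    rw [hF, det_fromBlocks_zero₂₁]; simp
  have hdetF₂ : F₂.det = 1 := by
    rw [hF₂, det_fromBlocks_zero₂₁]; simp
  have h1 : G.det = (Hmat c (3*p+1) (3*n+1)).det := by
    rw [hG]; exact det_submatrix_equiv_self _ _
  have h2 : G₃.det = G.det := by
    rw [← hGF, ← hEG, det_mul, det_mul, hdetE, hdetF]; ring
  have h3 : G₃.det = B.det * W.det := by
    rw [← det_submatrix_equiv_self (tau (Fin (n+1)) (Fin n) (Fin n)) G₃, hM₃,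
      det_fromBlocks_zero₂₁]
  have h4 : W.det = J^(n+1) * A.det * ((-(J^2))^n * Sg.det) := by
    have h5 := congrArg Matrix.det hWF
    rw [det_mul, hdetF₂, mul_one] at h5
    rw [h5, det_fromBlocks_zero₁₂, det_smul, det_smul]
    simp only [Fintype.card_fin]
  have hJp : J^(n+1) * (-(J^2))^n = (-1)^n * J := by
    have hJ31 : J^(3*n+1) = J := by rw [pow_succ, pow_mul, hJ3, one_pow, one_mul]
    have e1 : J^(n+1) * ((J^2)^n) = J^(3*n+1) := by
      rw [← pow_mul, ← pow_add]; congr 1; ring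
    calc J^(n+1) * (-(J^2))^n = J^(n+1) * ((-1)^n * (J^2)^n) := by rw [neg_pow]
      _ = (-1)^n * (J^(n+1) * (J^2)^n) := by ring
      _ = (-1)^n * J := by rw [e1, hJ31]
  rw [← h1, ← h2, h3, h4,
    show B.det * (J^(n+1) * A.det * ((-(J^2))^n * Sg.det))
      = (J^(n+1) * (-(J^2))^n) * (B.det * A.det * Sg.det) by ring, hJp]
  ring
end oddcase

theorem stmt9 (J : ℂ) (hJ : J = (Complex.I * Real.sqrt 3 - 1) / 2)
    (c : ℕ → ℂ) (hc0 : c 0 = 1)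
    (hc3 : ∀ n, c (3 * n) = c n)
    (hc31 : ∀ n, c (3 * n + 1) = J * c n)
    (hc32 : ∀ n, c (3 * n + 2) = 0)
    (s : ℕ → ℂ) (hs : ∀ n, s n = c n + c (n + 1)) :
    ∀ n p : ℕ, 1 ≤ n →
      (Hmat c (3 * p + 1) (3 * n)).det =
        (-1) ^ n * (Hmat c (p + 1) n).det ^ 2 * (Hmat s p n).det ∧
      (Hmat c (3 * p + 1) (3 * n + 1)).det =
        (-1) ^ n * J * (Hmat c (p + 1) n).det * (Hmat c p (n + 1)).det *
          (Hmat s (p + 1) n).det := by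
  have hJ3 : J ^ 3 = 1 := by
    have hr : ((Real.sqrt 3 : ℝ) : ℂ) ^ 2 = 3 := by
      rw [← Complex.ofReal_pow]
      norm_cast
      rw [Real.sq_sqrt] <;> norm_num
    rw [hJ]
    linear_combination ((Complex.I * ((Real.sqrt 3 : ℝ) : ℂ)^3
        - 3 * ((Real.sqrt 3 : ℝ) : ℂ)^2)/8) * Complex.I_sq
      + ((3 - Complex.I * ((Real.sqrt 3 : ℝ) : ℂ))/8) * hr
  intro n p hn
  exact ⟨even_case J c s n p hJ3 hc3 hc31 hc32 hs,
    odd_case J c s n p hJ3 hc3 hc31 hc32 hs⟩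
end

section
/- For the sequence c above, for all n ≥ 1 and p ≥ 0: det H_{3n+1}^{3p+2} = 0. -/
open Matrix

theorem stmt10 (J : ℂ) (hJ : J = (Complex.I * Real.sqrt 3 - 1) / 2)
    (c : ℕ → ℂ) (hc0 : c 0 = 1)
    (hc3 : ∀ n, c (3 * n) = c n)
    (hc31 : ∀ n, c (3 * n + 1) = J * c n)
    (hc32 : ∀ n, c (3 * n + 2) = 0) :
    ∀ n p : ℕ, 1 ≤ n → (Hmat c (3 * p + 2) (3 * n + 1)).det = 0 := by
  intro n p hn
  rw [← Matrix.exists_mulVec_eq_zero_iff]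
  set B : Matrix (Fin (n+1)) (Fin (n+1)) ℂ :=
    Matrix.of (fun t s => if (t:ℕ) < n then c (p + 1 + t + s) else 0) with hB
  have hBdet : B.det = 0 := by
    apply Matrix.det_eq_zero_of_row_eq_zero (Fin.last n)
    intro s
    simp [hB]
  obtain ⟨β, hβ0, hβ⟩ := Matrix.exists_mulVec_eq_zero_iff.mpr hBdet
  set β' : ℕ → ℂ := fun m => if h : m < n + 1 then β ⟨m, h⟩ else 0 with hβ'
  have hβ'eq : ∀ s : Fin (n+1), β' (s : ℕ) = β s := by
    intro s
    exact dif_pos s.isLt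
  have hrow : ∀ t : ℕ, t < n →
      ∑ s ∈ Finset.range (n+1), c (p + 1 + t + s) * β' s = 0 := by
    intro t ht
    have h := congrFun hβ ⟨t, by omega⟩
    have h2 : ∑ s : Fin (n+1), c (p + 1 + t + s) * β s = 0 := by
      simpa [Matrix.mulVec, dotProduct, hB, ht] using h
    rw [← h2, ← Fin.sum_univ_eq_sum_range (fun s => c (p + 1 + t + s) * β' s)]
    exact Finset.sum_congr rfl (fun s _ => by rw [hβ'eq])
  refine ⟨fun j => if (j:ℕ) % 3 = 0 then β' ((j:ℕ)/3) else 0, ?_, ?_⟩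
  · obtain ⟨s, hs⟩ := Function.ne_iff.mp hβ0
    apply Function.ne_iff.mpr
    refine ⟨⟨3 * s, by have := s.isLt; omega⟩, ?_⟩
    simp only [Pi.zero_apply]
    have h1 : (3 * (s:ℕ)) % 3 = 0 := by omega
    rw [if_pos h1]
    have h2 : 3 * (s:ℕ) / 3 = (s:ℕ) := by omega
    rw [h2, hβ'eq]
    exact hs
  · funext i
    show (∑ j : Fin (3*n+1), Hmat c (3*p+2) (3*n+1) i j *
        (if (j:ℕ) % 3 = 0 then β' ((j:ℕ)/3) else 0)) = 0
    have hstep1 : (∑ j : Fin (3*n+1), Hmat c (3*p+2) (3*n+1) i j *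
        (if (j:ℕ) % 3 = 0 then β' ((j:ℕ)/3) else 0))
        = ∑ j ∈ Finset.range (3*n+1), c (3*p+2 + i + j) *
        (if j % 3 = 0 then β' (j/3) else 0) :=
      Fin.sum_univ_eq_sum_range
        (fun j => c (3*p+2 + i + j) * (if j % 3 = 0 then β' (j/3) else 0)) (3*n+1)
    rw [hstep1]
    have hinj : ∀ x ∈ Finset.range (n+1), ∀ y ∈ Finset.range (n+1),
        3 * x = 3 * y → x = y := by
      intro a _ b _ h
      omega
    have himg := Finset.sum_image (s := Finset.range (n+1)) (g := fun s => 3 * s)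
      (f := fun j => c (3*p+2 + i + j) * (if j % 3 = 0 then β' (j/3) else 0)) hinj
    have hsub : ∑ j ∈ Finset.range (3*n+1), c (3*p+2 + i + j) *
        (if j % 3 = 0 then β' (j/3) else 0)
        = ∑ j ∈ (Finset.range (n+1)).image (fun s => 3 * s), c (3*p+2 + i + j) *
        (if j % 3 = 0 then β' (j/3) else 0) := by
      symm
      apply Finset.sum_subset
      · intro j hj
        rw [Finset.mem_image] at hj
        obtain ⟨s, hs, rfl⟩ := hj
        rw [Finset.mem_range] at hs ⊢
        omega
      · intro j hj hjim
        have h3 : ¬ (j % 3 = 0) := by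
          intro h0
          apply hjim
          rw [Finset.mem_image]
          rw [Finset.mem_range] at hj
          exact ⟨j/3, Finset.mem_range.mpr (by omega), by omega⟩
        rw [if_neg h3, mul_zero]
    have hstep2 : ∑ j ∈ Finset.range (3*n+1), c (3*p+2 + i + j) *
        (if j % 3 = 0 then β' (j/3) else 0)
        = ∑ s ∈ Finset.range (n+1), c (3*p+2 + i + 3*s) * β' s := by
      rw [hsub, himg]
      apply Finset.sum_congr rfl
      intro s _
      have h1 : 3 * s % 3 = 0 := by omega
      have h2 : 3 * s / 3 = s := by omega
      simp only [h1, if_pos, h2]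
    rw [hstep2]
    have hi := i.isLt
    have hcase : (i:ℕ) % 3 = 0 ∨ (i:ℕ) % 3 = 1 ∨ (i:ℕ) % 3 = 2 := by omega
    rcases hcase with h0 | h1 | h2
    · apply Finset.sum_eq_zero
      intro s _
      have harg : 3*p+2 + (i:ℕ) + 3*s = 3*(p + (i:ℕ)/3 + s) + 2 := by omega
      rw [harg, hc32, zero_mul]
    · have ht : (i:ℕ)/3 < n := by omega
      have heq : ∀ s ∈ Finset.range (n+1), c (3*p+2 + i + 3*s) * β' s
          = c (p + 1 + (i:ℕ)/3 + s) * β' s := by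
        intro s _
        have harg : 3*p+2 + (i:ℕ) + 3*s = 3*(p + 1 + (i:ℕ)/3 + s) := by omega
        rw [harg, hc3]
      rw [Finset.sum_congr rfl heq]
      exact hrow _ ht
    · have ht : (i:ℕ)/3 < n := by omega
      have heq : ∀ s ∈ Finset.range (n+1), c (3*p+2 + i + 3*s) * β' s
          = J * (c (p + 1 + (i:ℕ)/3 + s) * β' s) := by
        intro s _
        have harg : 3*p+2 + (i:ℕ) + 3*s = 3*(p + 1 + (i:ℕ)/3 + s) + 1 := by omega
        rw [harg, hc31, mul_assoc]
      rw [Finset.sum_congr rfl heq, ← Finset.mul_sum, hrow _ ht, mul_zero]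
end

section
/- For the sequences c and s = (c_n + c_{n+1}) above, for all n ≥ 1 and p ≥ 0: det Σ_{3n+2}^{3p+2} = 0. -/
open Matrix

theorem stmt11 (J : ℂ) (hJ : J = (Complex.I * Real.sqrt 3 - 1) / 2)
    (c : ℕ → ℂ) (hc0 : c 0 = 1)
    (hc3 : ∀ n, c (3 * n) = c n)
    (hc31 : ∀ n, c (3 * n + 1) = J * c n)
    (hc32 : ∀ n, c (3 * n + 2) = 0)
    (s : ℕ → ℂ) (hs : ∀ n, s n = c n + c (n + 1)) :
    ∀ n p : ℕ, 1 ≤ n → (Hmat s (3 * p + 2) (3 * n + 2)).det = 0 := by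
  intro n p _hn
  -- basic facts about J
  have h3 : ((Real.sqrt 3 : ℝ) : ℂ) ^ 2 = 3 := by
    rw [← Complex.ofReal_pow, Real.sq_sqrt (by norm_num : (0:ℝ) ≤ 3)]
    norm_num
  have hJ2 : J ^ 2 + J + 1 = 0 := by
    rw [hJ]
    linear_combination (((Real.sqrt 3 : ℝ) : ℂ) ^ 2 / 4) * Complex.I_sq - (1/4) * h3
  have hJ3 : J ^ 3 = 1 := by linear_combination (J - 1) * hJ2
  -- values of s at the three residues
  have s3 : ∀ t, s (3 * t) = c t + J * c t := by
    intro t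
    rw [hs (3 * t), hc3]
    congr 1
    rw [show 3 * t + 1 = 3 * t + 1 from rfl, hc31]
  have s31 : ∀ t, s (3 * t + 1) = J * c t := by
    intro t
    rw [hs (3 * t + 1), hc31, show 3 * t + 1 + 1 = 3 * t + 2 by ring, hc32, add_zero]
  have s32 : ∀ t, s (3 * t + 2) = c (t + 1) := by
    intro t
    rw [hs (3 * t + 2), hc32, show 3 * t + 2 + 1 = 3 * (t + 1) by ring, hc3, zero_add]
  -- the three row identities
  have L1 : ∀ t, J ^ 2 * s (3 * t + 2) + s (3 * t + 3) = 0 := by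
    intro t
    rw [s32, show 3 * t + 3 = 3 * (t + 1) by ring, s3]
    linear_combination c (t + 1) * hJ2
  have L2 : ∀ t, J ^ 2 * s (3 * t) + s (3 * t + 1) = 0 := by
    intro t
    rw [s3, s31]
    linear_combination c t * hJ2 + c t * hJ3
  have L3 : ∀ t, J ^ 2 * s (3 * t + 1) + s (3 * t + 2) = s t := by
    intro t
    rw [s31, s32, hs t]
    linear_combination c t * hJ3
  -- kernel vector w of the small rectangular system
  set N : Matrix (Fin (n + 1)) (Fin (n + 1)) ℂ :=
    Matrix.of (fun u q => if (u : ℕ) < n then s (p + 1 + u + q) else 0) with hN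
  have hdetN : N.det = 0 := by
    apply Matrix.det_eq_zero_of_row_eq_zero (⟨n, Nat.lt_succ_self n⟩ : Fin (n + 1))
    intro j
    simp [hN]
  obtain ⟨w, hw0, hww⟩ := (Matrix.exists_mulVec_eq_zero_iff (A := ℂ)).mpr hdetN
  -- ℕ-valued versions
  set W : ℕ → ℂ := fun q => if h : q < n + 1 then w ⟨q, h⟩ else 0 with hW
  set V : ℕ → ℂ := fun j =>
    if j % 3 = 0 then J ^ 2 * W (j / 3) else if j % 3 = 1 then W (j / 3) else 0 with hV
  set v : Fin (3 * n + 2) → ℂ := fun j => V (j : ℕ) with hv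
  -- v ≠ 0
  have hvne : v ≠ 0 := by
    intro hveq
    apply hw0
    funext q
    have hq := q.isLt
    have h1 : (3 * (q : ℕ) + 1) % 3 = 1 := by omega
    have h2 : (3 * (q : ℕ) + 1) / 3 = (q : ℕ) := by omega
    have hc1 : V (3 * (q : ℕ) + 1) = W (q : ℕ) := by
      simp only [hV]
      rw [if_neg (by omega : ¬ (3 * (q : ℕ) + 1) % 3 = 0), if_pos h1, h2]
    have hc2 : W (q : ℕ) = w q := by
      simp only [hW]
      rw [dif_pos hq]
    have := congrFun hveq ⟨3 * (q : ℕ) + 1, by omega⟩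
    simp only [hv, Pi.zero_apply] at this
    rw [hc1, hc2] at this
    simpa using this
  -- the sum-splitting lemma
  have key : ∀ (f : ℕ → ℂ), (∀ q, f (3 * q + 2) = 0) → ∀ m,
      ∑ j ∈ Finset.range (3 * m + 2), f j
        = ∑ q ∈ Finset.range (m + 1), (f (3 * q) + f (3 * q + 1)) := by
    intro f hf m
    induction m with
    | zero => simp [Finset.sum_range_succ]
    | succ m ih =>
      have e : 3 * (m + 1) + 2 = (3 * m + 2) + 1 + 1 + 1 := by ring
      rw [e, Finset.sum_range_succ, Finset.sum_range_succ, Finset.sum_range_succ, ih,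
        Finset.sum_range_succ (n := m + 1)]
      rw [hf m]
      have e1 : 3 * m + 2 + 1 = 3 * (m + 1) := by ring
      have e2 : 3 * m + 2 + 1 + 1 = 3 * (m + 1) + 1 := by ring
      rw [e1, e2]
      ring
  -- main computation : M v = 0
  have hmul : (Hmat s (3 * p + 2) (3 * n + 2)).mulVec v = 0 := by
    funext i
    have hVzero : ∀ q, s (3 * p + 2 + (i : ℕ) + (3 * q + 2)) * V (3 * q + 2) = 0 := by
      intro q
      have h1 : (3 * q + 2) % 3 = 2 := by omega
      simp only [hV, h1]
      norm_num
    have hterm : ∀ q, s (3 * p + 2 + (i : ℕ) + 3 * q) * V (3 * q)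
        + s (3 * p + 2 + (i : ℕ) + (3 * q + 1)) * V (3 * q + 1)
        = (J ^ 2 * s (3 * p + 2 + (i : ℕ) + 3 * q)
            + s (3 * p + 2 + (i : ℕ) + 3 * q + 1)) * W q := by
      intro q
      have h0 : (3 * q) % 3 = 0 := by omega
      have h0' : (3 * q) / 3 = q := by omega
      have h1 : (3 * q + 1) % 3 = 1 := by omega
      have h1' : (3 * q + 1) / 3 = q := by omega
      simp only [hV, h0, h0', h1, h1']
      norm_num
      have e : 3 * p + 2 + (i : ℕ) + (3 * q + 1) = 3 * p + 2 + (i : ℕ) + 3 * q + 1 := by ring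
      rw [e]
      ring
    show ∑ j : Fin (3 * n + 2), (Hmat s (3 * p + 2) (3 * n + 2)) i j * v j = 0
    have hrw : ∑ j : Fin (3 * n + 2), (Hmat s (3 * p + 2) (3 * n + 2)) i j * v j
        = ∑ j ∈ Finset.range (3 * n + 2), s (3 * p + 2 + (i : ℕ) + j) * V j := by
      rw [← Fin.sum_univ_eq_sum_range (fun j => s (3 * p + 2 + (i : ℕ) + j) * V j)]
      rfl
    rw [hrw, key _ hVzero n]
    rcases (by omega : (i : ℕ) % 3 = 0 ∨ (i : ℕ) % 3 = 1 ∨ (i : ℕ) % 3 = 2) with h | h | h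
    · apply Finset.sum_eq_zero
      intro q _
      rw [hterm q]
      set u := (i : ℕ) / 3 with hu
      have e : 3 * p + 2 + (i : ℕ) + 3 * q = 3 * (p + u + q) + 2 := by omega
      have e' : 3 * p + 2 + (i : ℕ) + 3 * q + 1 = 3 * (p + u + q) + 3 := by omega
      rw [e', e, L1]
      ring
    · apply Finset.sum_eq_zero
      intro q _
      rw [hterm q]
      set u := (i : ℕ) / 3 with hu
      have e : 3 * p + 2 + (i : ℕ) + 3 * q = 3 * (p + u + q + 1) := by omega
      have e' : 3 * p + 2 + (i : ℕ) + 3 * q + 1 = 3 * (p + u + q + 1) + 1 := by omega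
      rw [e', e, L2]
      ring
    · set u := (i : ℕ) / 3 with hu
      have hun : u < n := by
        have := i.isLt
        omega
      have hstep : ∀ q ∈ Finset.range (n + 1),
          s (3 * p + 2 + (i : ℕ) + 3 * q) * V (3 * q)
            + s (3 * p + 2 + (i : ℕ) + (3 * q + 1)) * V (3 * q + 1)
          = s (p + 1 + u + q) * W q := by
        intro q _
        rw [hterm q]
        have e : 3 * p + 2 + (i : ℕ) + 3 * q = 3 * (p + 1 + u + q) + 1 := by omega
        have e' : 3 * p + 2 + (i : ℕ) + 3 * q + 1 = 3 * (p + 1 + u + q) + 2 := by omega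
        rw [e', e, L3]
      rw [Finset.sum_congr rfl hstep]
      have := congrFun hww (⟨u, by omega⟩ : Fin (n + 1))
      simp only [Matrix.mulVec, dotProduct, hN, Matrix.of_apply, Pi.zero_apply] at this
      rw [← Fin.sum_univ_eq_sum_range (fun q => s (p + 1 + u + q) * W q)]
      rw [← this]
      apply Finset.sum_congr rfl
      intro q _
      have hq := q.isLt
      simp only [hW]
      rw [if_pos hun, dif_pos hq]
  exact (Matrix.exists_mulVec_eq_zero_iff (A := ℂ)).mp ⟨v, hvne, hmul⟩
end

section
/- The Hankel determinants det H_n^1 of the sequence c satisfy: det H_0^1 = 1, det H_{3n}^1 = det H_n^1, det H_{3n+1}^1 = J·det H_n^1, and det H_{3n+2}^1 = J·det H_{n+1}^1 for all n ≥ 0. -/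
open Matrix

set_option linter.unusedSectionVars false
namespace Stmt17aux

/-- scalars (D, E, G, H) -/
noncomputable def scal (J : ℂ) (k : ℕ) : ℂ × ℂ × ℂ × ℂ :=
  if h : k = 0 then (J, 1, -J^2, J)
  else
    have : k / 3 < k := Nat.div_lt_self (Nat.pos_of_ne_zero h) (by norm_num)
    let w := scal J (k / 3)
    if k % 3 = 0 then (J, w.2.1, -J^2 * w.2.1, J)
    else if k % 3 = 1 then (w.1, J * w.2.1, J * w.2.2.1, J^2)
    else (J^2, -J^2 * w.2.2.1, w.2.2.1, w.2.2.2)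
termination_by k

noncomputable def Dv (J : ℂ) (k : ℕ) : ℂ := (scal J k).1
noncomputable def Ev (J : ℂ) (k : ℕ) : ℂ := (scal J k).2.1
noncomputable def Gv (J : ℂ) (k : ℕ) : ℂ := (scal J k).2.2.1
noncomputable def Hv (J : ℂ) (k : ℕ) : ℂ := (scal J k).2.2.2

variable (J : ℂ)

lemma scal_zero : scal J 0 = (J, 1, -J^2, J) := by rw [scal]; simp

lemma scal_m0 (m : ℕ) (hm : m ≠ 0) :
    scal J (3*m) = (J, Ev J m, -J^2 * Ev J m, J) := by
  rw [scal]
  have h1 : 3*m ≠ 0 := by omega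
  have h2 : 3*m/3 = m := by omega
  have h3 : 3*m % 3 = 0 := by omega
  simp [h1, h2, h3, Ev]

lemma scal_m1 (m : ℕ) :
    scal J (3*m+1) = (Dv J m, J * Ev J m, J * Gv J m, J^2) := by
  rw [scal]
  have h1 : 3*m+1 ≠ 0 := by omega
  have h2 : (3*m+1)/3 = m := by omega
  have h3 : (3*m+1) % 3 = 1 := by omega
  simp [h1, h2, h3, Dv, Ev, Gv]

lemma scal_m2 (m : ℕ) :
    scal J (3*m+2) = (J^2, -J^2 * Gv J m, Gv J m, Hv J m) := by
  rw [scal]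
  have h1 : 3*m+2 ≠ 0 := by omega
  have h2 : (3*m+2)/3 = m := by omega
  have h3 : (3*m+2) % 3 = 2 := by omega
  simp [h1, h2, h3, Gv, Hv]

lemma Dv_zero : Dv J 0 = J := by rw [Dv, scal_zero]
lemma Ev_zero : Ev J 0 = 1 := by rw [Ev, scal_zero]
lemma Gv_zero : Gv J 0 = -J^2 := by rw [Gv, scal_zero]
lemma Hv_zero : Hv J 0 = J := by rw [Hv, scal_zero]

lemma Dv_m0 (m : ℕ) : Dv J (3*m) = J := by
  rcases Nat.eq_zero_or_pos m with rfl | hm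
  · simpa using Dv_zero J
  · rw [Dv, scal_m0 J m (by omega)]
lemma Ev_m0 (m : ℕ) : Ev J (3*m) = Ev J m := by
  rcases Nat.eq_zero_or_pos m with rfl | hm
  · simp
  · rw [Ev, scal_m0 J m (by omega)]
lemma Gv_m0 (m : ℕ) : Gv J (3*m) = -J^2 * Ev J m := by
  rcases Nat.eq_zero_or_pos m with rfl | hm
  · rw [Gv_zero, Ev_zero]; ring
  · rw [Gv, scal_m0 J m (by omega)]
lemma Hv_m0 (m : ℕ) : Hv J (3*m) = J := by
  rcases Nat.eq_zero_or_pos m with rfl | hm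
  · simpa using Hv_zero J
  · rw [Hv, scal_m0 J m (by omega)]

lemma Dv_m1 (m : ℕ) : Dv J (3*m+1) = Dv J m := by rw [Dv, scal_m1]
lemma Ev_m1 (m : ℕ) : Ev J (3*m+1) = J * Ev J m := by rw [Ev, scal_m1]
lemma Gv_m1 (m : ℕ) : Gv J (3*m+1) = J * Gv J m := by rw [Gv, scal_m1]
lemma Hv_m1 (m : ℕ) : Hv J (3*m+1) = J^2 := by rw [Hv, scal_m1]
lemma Dv_m2 (m : ℕ) : Dv J (3*m+2) = J^2 := by rw [Dv, scal_m2]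
lemma Ev_m2 (m : ℕ) : Ev J (3*m+2) = -J^2 * Gv J m := by rw [Ev, scal_m2]
lemma Gv_m2 (m : ℕ) : Gv J (3*m+2) = Gv J m := by rw [Gv, scal_m2]
lemma Hv_m2 (m : ℕ) : Hv J (3*m+2) = Hv J m := by rw [Hv, scal_m2]

variable {J} (hJ2 : J^2 + J + 1 = 0)
include hJ2

lemma J3 : J^3 = 1 := by linear_combination (J - 1) * hJ2
lemma Jne : J ≠ 0 := by
  intro h; rw [h] at hJ2; norm_num at hJ2

/-- the scalar invariant -/
lemma psi (k : ℕ) :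
    (Dv J k = J ∨ Dv J k = J^2) ∧ (Hv J k = J ∨ Hv J k = J^2) ∧
    Ev J k ≠ 0 ∧ Gv J k ≠ 0 ∧
    Gv J k * Dv J k = -Ev J k ∧ Ev J (k+1) * Hv J k = -Gv J k := by
  induction k using Nat.strong_induction_on with
  | _ k IH =>
    have hJ3 := J3 hJ2
    have hJn := Jne hJ2
    have hJ2n : J^2 ≠ 0 := pow_ne_zero _ hJn
    obtain ⟨m, hm⟩ : ∃ m, k = 3*m ∨ k = 3*m+1 ∨ k = 3*m+2 := ⟨k/3, by omega⟩
    rcases hm with rfl | rfl | rfl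
    · rcases Nat.eq_zero_or_pos m with rfl | hmpos
      · norm_num
        refine ⟨Or.inl (Dv_zero J), Or.inl (Hv_zero J), by simp [Ev_zero],
          by simp [Gv_zero, hJ2n], by rw [Gv_zero, Dv_zero, Ev_zero]; linear_combination -hJ3, ?_⟩
        have e1 : Ev J 1 = J * Ev J 0 := by simpa using Ev_m1 J 0
        rw [e1, Ev_zero, Hv_zero, Gv_zero]; ring
      · obtain ⟨_, _, hE, _, _, _⟩ := IH m (by omega)
        refine ⟨Or.inl (Dv_m0 J m), Or.inl (Hv_m0 J m), by rw [Ev_m0]; exact hE, ?_, ?_, ?_⟩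
        · rw [Gv_m0]; exact mul_ne_zero (by simp [hJ2n]) hE
        · rw [Gv_m0, Dv_m0, Ev_m0]; linear_combination (-(Ev J m)) * hJ3
        · rw [show 3*m+1 = 3*m+1 from rfl, Ev_m1, Hv_m0, Gv_m0]; ring
    · obtain ⟨hD, hH, hE, hG, hI1, hI2⟩ := IH m (by omega)
      refine ⟨by rw [Dv_m1]; exact hD, Or.inr (Hv_m1 J m),
        by rw [Ev_m1]; exact mul_ne_zero hJn hE,
        by rw [Gv_m1]; exact mul_ne_zero hJn hG, ?_, ?_⟩
      · rw [Gv_m1, Dv_m1, Ev_m1]; linear_combination J * hI1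
      · rw [show (3*m+1)+1 = 3*m+2 by ring, Ev_m2, Hv_m1, Gv_m1]
        linear_combination (-J * Gv J m) * hJ3
    · obtain ⟨hD, hH, hE, hG, hI1, hI2⟩ := IH m (by omega)
      refine ⟨Or.inr (Dv_m2 J m), by rw [Hv_m2]; exact hH,
        by rw [Ev_m2]; exact mul_ne_zero (by simp [hJ2n]) hG,
        by rw [Gv_m2]; exact hG, ?_, ?_⟩
      · rw [Gv_m2, Dv_m2, Ev_m2]; ring
      · rw [show (3*m+2)+1 = 3*(m+1) by ring, Ev_m0, Hv_m2, Gv_m2]; exact hI2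

omit hJ2

/-! ### polynomial coefficient sequences -/

def tri (a b c : ℕ → ℂ) (j : ℕ) : ℂ :=
  if j % 3 = 0 then a (j/3) else if j % 3 = 1 then b (j/3) else c (j/3)

lemma tri0 (a b c : ℕ → ℂ) (t : ℕ) : tri a b c (3*t) = a t := by
  have h1 : (3*t) % 3 = 0 := by omega
  have h2 : 3*t/3 = t := by omega
  simp [tri, h1, h2]

lemma tri1 (a b c : ℕ → ℂ) (t : ℕ) : tri a b c (3*t+1) = b t := by
  have h1 : (3*t+1) % 3 = 1 := by omega
  have h2 : (3*t+1)/3 = t := by omega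
  simp [tri, h1, h2]

lemma tri2 (a b c : ℕ → ℂ) (t : ℕ) : tri a b c (3*t+2) = c t := by
  have h1 : (3*t+2) % 3 = 2 := by omega
  have h2 : (3*t+2)/3 = t := by omega
  simp [tri, h1, h2]

noncomputable def kap (J : ℂ) (m : ℕ) : ℂ := J / Hv J (m-1)
noncomputable def lam (J : ℂ) (m : ℕ) : ℂ := J^2 / Dv J m

noncomputable def pq (J : ℂ) (k : ℕ) : (ℕ → ℂ) × (ℕ → ℂ) :=
  if h : k = 0 then (fun j => if j = 0 then 1 else 0, fun j => if j = 0 then 1 else 0)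
  else
    have h1 : k / 3 < k := Nat.div_lt_self (Nat.pos_of_ne_zero h) (by norm_num)
    have h2 : k / 3 - 1 < k := lt_of_le_of_lt (Nat.sub_le _ _) h1
    if k % 3 = 0 then
      (tri (fun t => (pq J (k/3)).1 t + J^2 * kap J (k/3) * (pq J (k/3-1)).2 t)
           (fun t => -J * kap J (k/3) * (pq J (k/3-1)).2 t)
           (fun t => kap J (k/3) * (pq J (k/3-1)).2 t),
       tri (fun t => (pq J (k/3)).1 t + J^2 * kap J (k/3) * (pq J (k/3-1)).2 t)
           (fun t => kap J (k/3) * (pq J (k/3-1)).2 t)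
           (fun _ => 0))
    else if k % 3 = 1 then
      (tri (fun _ => 0) (pq J (k/3)).1 (fun _ => 0),
       tri (fun t => lam J (k/3) * (pq J (k/3)).1 t + J^2 * (pq J (k/3)).2 t)
           (pq J (k/3)).2 (fun _ => 0))
    else
      (tri (fun t => lam J (k/3) * (pq J (k/3)).1 t + J^2 * (pq J (k/3)).2 t)
           (fun t => -J * (pq J (k/3)).2 t)
           (pq J (k/3)).2,
       tri (fun _ => 0) (fun t => J^2 * (pq J (k/3)).2 t) (pq J (k/3)).2)
termination_by k

noncomputable def pf (J : ℂ) (k : ℕ) : ℕ → ℂ := (pq J k).1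
noncomputable def qf (J : ℂ) (k : ℕ) : ℕ → ℂ := (pq J k).2

lemma pq_zero : pq J 0 = (fun j => if j = 0 then 1 else 0, fun j => if j = 0 then 1 else 0) := by
  rw [pq]; simp

lemma pq_m0 (m : ℕ) (hm : m ≠ 0) :
    pq J (3*m) =
      (tri (fun t => pf J m t + J^2 * kap J m * qf J (m-1) t)
           (fun t => -J * kap J m * qf J (m-1) t)
           (fun t => kap J m * qf J (m-1) t),
       tri (fun t => pf J m t + J^2 * kap J m * qf J (m-1) t)
           (fun t => kap J m * qf J (m-1) t)
           (fun _ => 0)) := by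
  rw [pq]
  have h1 : 3*m ≠ 0 := by omega
  have h2 : 3*m/3 = m := by omega
  have h3 : (3*m) % 3 = 0 := by omega
  simp [h1, h2, h3, pf, qf]

lemma pq_m1 (m : ℕ) :
    pq J (3*m+1) =
      (tri (fun _ => 0) (pf J m) (fun _ => 0),
       tri (fun t => lam J m * pf J m t + J^2 * qf J m t) (qf J m) (fun _ => 0)) := by
  rw [pq]
  have h1 : 3*m+1 ≠ 0 := by omega
  have h2 : (3*m+1)/3 = m := by omega
  have h3 : (3*m+1) % 3 = 1 := by omega
  simp [h1, h2, h3, pf, qf]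

lemma pq_m2 (m : ℕ) :
    pq J (3*m+2) =
      (tri (fun t => lam J m * pf J m t + J^2 * qf J m t)
           (fun t => -J * qf J m t) (qf J m),
       tri (fun _ => 0) (fun t => J^2 * qf J m t) (qf J m)) := by
  rw [pq]
  have h1 : 3*m+2 ≠ 0 := by omega
  have h2 : (3*m+2)/3 = m := by omega
  have h3 : (3*m+2) % 3 = 2 := by omega
  simp [h1, h2, h3, pf, qf]

/-! ### the bilinear sums -/

noncomputable def Fc (c : ℕ → ℂ) (n : ℕ) (a : ℕ → ℂ) (K : ℕ) : ℂ :=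
  ∑ t ∈ Finset.range K, c (n+t) * a t

lemma Fc_ext (c : ℕ → ℂ) (n : ℕ) (a : ℕ → ℂ) {K1 K2 : ℕ}
    (hK : K1 ≤ K2) (h : ∀ t, K1 ≤ t → a t = 0) :
    Fc c n a K2 = Fc c n a K1 := by
  refine (Finset.sum_subset (Finset.range_subset_range.2 hK) fun x _ hx => ?_).symm
  rw [h x (by simpa using hx), mul_zero]

lemma sum3 (K : ℕ) (f : ℕ → ℂ) :
    ∑ j ∈ Finset.range (3*K), f j
      = ∑ t ∈ Finset.range K, (f (3*t) + f (3*t+1) + f (3*t+2)) := by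
  induction K with
  | zero => simp
  | succ K IH =>
    rw [show 3*(K+1) = (3*K+1)+1+1 by ring, Finset.sum_range_succ, Finset.sum_range_succ,
      Finset.sum_range_succ, Finset.sum_range_succ (n := K), IH]
    ring

section Rlem
variable (c : ℕ → ℂ) (hc3 : ∀ n, c (3*n) = c n) (hc31 : ∀ n, c (3*n+1) = J * c n)
  (hc32 : ∀ n, c (3*n+2) = 0) (A B C : ℕ → ℂ) (n K : ℕ)
include hc3 hc31 hc32

lemma R1 : Fc c (3*n) (tri A B C) (3*K) = Fc c n A K + J * Fc c n B K := by
  unfold Fc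
  rw [Finset.mul_sum, ← Finset.sum_add_distrib, sum3]
  refine Finset.sum_congr rfl fun t _ => ?_
  rw [tri0, tri1, tri2, show 3*n + (3*t) = 3*(n+t) by ring,
    show 3*n + (3*t+1) = 3*(n+t)+1 by ring, show 3*n + (3*t+2) = 3*(n+t)+2 by ring,
    hc3, hc31, hc32]
  ring

lemma R2 : Fc c (3*n+1) (tri A B C) (3*K) = J * Fc c n A K + Fc c (n+1) C K := by
  unfold Fc
  rw [Finset.mul_sum, ← Finset.sum_add_distrib, sum3]
  refine Finset.sum_congr rfl fun t _ => ?_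
  rw [tri0, tri1, tri2, show 3*n+1 + (3*t) = 3*(n+t)+1 by ring,
    show 3*n+1 + (3*t+1) = 3*(n+t)+2 by ring, show 3*n+1 + (3*t+2) = 3*(n+t+1) by ring,
    hc31, hc32, hc3, show n+t+1 = n+1+t by ring]
  ring

lemma R3 : Fc c (3*n+2) (tri A B C) (3*K) = Fc c (n+1) B K + J * Fc c (n+1) C K := by
  unfold Fc
  rw [Finset.mul_sum, ← Finset.sum_add_distrib, sum3]
  refine Finset.sum_congr rfl fun t _ => ?_
  rw [tri0, tri1, tri2, show 3*n+2 + (3*t) = 3*(n+t)+2 by ring,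
    show 3*n+2 + (3*t+1) = 3*(n+t+1) by ring, show 3*n+2 + (3*t+2) = 3*(n+t+1)+1 by ring,
    hc32, hc3, hc31, show n+t+1 = n+1+t by ring]
  ring

lemma R1' (N : ℕ) (hN : N = 3*n) :
    Fc c N (tri A B C) (3*K) = Fc c n A K + J * Fc c n B K := by
  subst hN; exact R1 c hc3 hc31 hc32 A B C n K

lemma R2' (N : ℕ) (hN : N = 3*n+1) :
    Fc c N (tri A B C) (3*K) = J * Fc c n A K + Fc c (n+1) C K := by
  subst hN; exact R2 c hc3 hc31 hc32 A B C n K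

lemma R3' (N : ℕ) (hN : N = 3*n+2) :
    Fc c N (tri A B C) (3*K) = Fc c (n+1) B K + J * Fc c (n+1) C K := by
  subst hN; exact R3 c hc3 hc31 hc32 A B C n K

end Rlem

lemma Fc_add (c : ℕ → ℂ) (n : ℕ) (a b : ℕ → ℂ) (K : ℕ) :
    Fc c n (fun t => a t + b t) K = Fc c n a K + Fc c n b K := by
  simp [Fc, Finset.sum_add_distrib, mul_add]

lemma Fc_smul (c : ℕ → ℂ) (n : ℕ) (x : ℂ) (a : ℕ → ℂ) (K : ℕ) :
    Fc c n (fun t => x * a t) K = x * Fc c n a K := by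
  simp [Fc, Finset.mul_sum, mul_left_comm]

lemma Fc_zero (c : ℕ → ℂ) (n K : ℕ) : Fc c n (fun _ => (0:ℂ)) K = 0 := by
  simp [Fc]

end Stmt17aux

/-! ### the master orthogonality theorem -/

namespace Stmt17aux
section Master
variable {J : ℂ} (c : ℕ → ℂ) (hJ2 : J^2 + J + 1 = 0) (hc0 : c 0 = 1)
  (hc3 : ∀ n, c (3*n) = c n) (hc31 : ∀ n, c (3*n+1) = J * c n) (hc32 : ∀ n, c (3*n+2) = 0)
include hJ2 hc0 hc3 hc31 hc32

theorem master (k : ℕ) :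
    (∀ j, k < j → pf J k j = 0) ∧ pf J k k = 1 ∧
    (∀ j, k < j → qf J k j = 0) ∧ qf J k k = 1 ∧
    (∀ n, 1 ≤ n → n ≤ k → Fc c n (pf J k) (k+1) = 0) ∧
    Fc c (k+1) (pf J k) (k+1) = Dv J k ∧
    Fc c 0 (pf J k) (k+1) = Ev J k ∧
    (∀ n, 1 ≤ n → n ≤ k → Fc c n (qf J k) (k+1) + Fc c (n+1) (qf J k) (k+1) = 0) ∧
    (Fc c (k+1) (qf J k) (k+1) + Fc c (k+2) (qf J k) (k+1) = Hv J k) ∧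
    (Fc c 0 (qf J k) (k+1) + Fc c 1 (qf J k) (k+1) = Gv J k) := by
  have hJ3 := J3 hJ2
  have hc1 : c 1 = J := by have := hc31 0; norm_num [hc0] at this; exact this
  have hc2 : c 2 = 0 := by have := hc32 0; norm_num at this; exact this
  induction k using Nat.strong_induction_on with
  | _ k IH =>
  obtain ⟨m, hm⟩ : ∃ m, k = 3*m ∨ k = 3*m+1 ∨ k = 3*m+2 := ⟨k/3, by omega⟩
  rcases hm with rfl | rfl | rfl
  · rcases Nat.eq_zero_or_pos m with rfl | hm0
    · -- base case k = 0
      norm_num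
      have hp0 : pf J 0 = fun j => if j = 0 then (1:ℂ) else 0 := by rw [pf, pq_zero]
      have hq0 : qf J 0 = fun j => if j = 0 then (1:ℂ) else 0 := by rw [qf, pq_zero]
      refine ⟨?_, ?_, ?_, ?_, ?_, ?_, ?_, ?_, ?_, ?_⟩
      · intro j hj; rw [hp0]; simp only [ite_eq_right_iff]; omega
      · rw [hp0]; simp
      · intro j hj; rw [hq0]; simp only [ite_eq_right_iff]; omega
      · rw [hq0]; simp
      · intro n h1 h2; omega
      · simp [Fc, hp0, hc1, Dv_zero]
      · simp [Fc, hp0, hc0, Ev_zero]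
      · intro n h1 h2; omega
      · simp [Fc, hq0, hc1, hc2, Hv_zero]
      · simp only [Fc, hq0, Finset.range_one, Finset.sum_singleton]
        norm_num [hc0, hc1, Gv_zero]
        linear_combination hJ2
    · -- case k = 3m, m ≥ 1
      obtain ⟨pS, pM, qS, qM, pO, pD, pE, qO, qH, qG⟩ := IH m (by omega)
      obtain ⟨pS', pM', qS', qM', pO', pD', pE', qO', qH', qG'⟩ := IH (m-1) (by omega)
      rw [show m-1+1 = m by omega] at pO' pD' pE' qO' qH' qG'
      rw [show m-1+2 = m+1 by omega] at qH'
      -- scalar facts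
      have hHne : Hv J (m-1) ≠ 0 := by
        rcases (psi hJ2 (m-1)).2.1 with h | h <;> rw [h]
        · exact Jne hJ2
        · exact pow_ne_zero _ (Jne hJ2)
      have hI2' : Ev J m * Hv J (m-1) = -Gv J (m-1) := by
        have := (psi hJ2 (m-1)).2.2.2.2.2
        rwa [show m-1+1 = m by omega] at this
      have hkapH : kap J m * Hv J (m-1) = J := by rw [kap]; field_simp
      have hkey : J * Ev J m + kap J m * Gv J (m-1) = 0 := by
        rw [kap]; field_simp; linear_combination J * hI2'
      -- components
      have hp3 : pf J (3*m) = tri (fun t => pf J m t + J^2*kap J m*qf J (m-1) t)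
          (fun t => -J*kap J m*qf J (m-1) t) (fun t => kap J m*qf J (m-1) t) := by
        rw [pf, pq_m0 m (by omega)]
      have hq3 : qf J (3*m) = tri (fun t => pf J m t + J^2*kap J m*qf J (m-1) t)
          (fun t => kap J m*qf J (m-1) t) (fun _ => 0) := by
        rw [qf, pq_m0 m (by omega)]
      have hq'z : ∀ t, m ≤ t → qf J (m-1) t = 0 := fun t ht => qS' t (by omega)
      have hsuppP : ∀ j, 3*m < j → pf J (3*m) j = 0 := by
        intro j hj; rw [hp3]
        obtain ⟨t, ht⟩ : ∃ t, j = 3*t ∨ j = 3*t+1 ∨ j = 3*t+2 := ⟨j/3, by omega⟩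
        rcases ht with rfl | rfl | rfl
        · rw [tri0, pS t (by omega), hq'z t (by omega)]; ring
        · rw [tri1, hq'z t (by omega)]; ring
        · rw [tri2, hq'z t (by omega)]; ring
      have hsuppQ : ∀ j, 3*m < j → qf J (3*m) j = 0 := by
        intro j hj; rw [hq3]
        obtain ⟨t, ht⟩ : ∃ t, j = 3*t ∨ j = 3*t+1 ∨ j = 3*t+2 := ⟨j/3, by omega⟩
        rcases ht with rfl | rfl | rfl
        · rw [tri0, pS t (by omega), hq'z t (by omega)]; ring
        · rw [tri1, hq'z t (by omega)]; ring
        · rw [tri2]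
      have hextP : ∀ u, Fc c u (pf J (3*m)) (3*m+1) = Fc c u (pf J (3*m)) (3*(m+1)) :=
        fun u => (Fc_ext c u _ (by omega) (fun t ht => hsuppP t (by omega))).symm
      have hextQ : ∀ u, Fc c u (qf J (3*m)) (3*m+1) = Fc c u (qf J (3*m)) (3*(m+1)) :=
        fun u => (Fc_ext c u _ (by omega) (fun t ht => hsuppQ t (by omega))).symm
      have hq'ext : ∀ u, Fc c u (qf J (m-1)) (m+1) = Fc c u (qf J (m-1)) m :=
        fun u => Fc_ext c u _ (by omega) hq'z
      have hA : ∀ u, Fc c u (fun t => pf J m t + J^2*kap J m*qf J (m-1) t) (m+1)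
          = Fc c u (pf J m) (m+1) + J^2*kap J m * Fc c u (qf J (m-1)) m := by
        intro u; rw [Fc_add, Fc_smul, hq'ext u]
      have hB : ∀ u, Fc c u (fun t => -J*kap J m*qf J (m-1) t) (m+1)
          = -J*kap J m * Fc c u (qf J (m-1)) m := by
        intro u; rw [Fc_smul, hq'ext u]
      have hC : ∀ u, Fc c u (fun t => kap J m*qf J (m-1) t) (m+1)
          = kap J m * Fc c u (qf J (m-1)) m := by
        intro u; rw [Fc_smul, hq'ext u]
      refine ⟨hsuppP, ?_, hsuppQ, ?_, ?_, ?_, ?_, ?_, ?_, ?_⟩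
      · rw [hp3, tri0, pM, hq'z m (by omega)]; ring
      · rw [hq3, tri0, pM, hq'z m (by omega)]; ring
      · -- P orthogonality
        intro n h1 h2
        rw [hextP n, hp3]
        obtain ⟨u, hu⟩ : ∃ u, n = 3*u ∨ n = 3*u+1 ∨ n = 3*u+2 := ⟨n/3, by omega⟩
        rcases hu with rfl | rfl | rfl
        · rw [R1 c hc3 hc31 hc32, hA u, hB u, pO u (by omega) (by omega)]; ring
        · rw [R2 c hc3 hc31 hc32, hA u, hC (u+1)]
          rcases Nat.eq_zero_or_pos u with rfl | hu0
          · rw [pE]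
            linear_combination kap J m * qG' + hkey
              + (kap J m * Fc c 0 (qf J (m-1)) m) * hJ3
          · rw [pO u (by omega) (by omega)]
            linear_combination kap J m * qO' u (by omega) (by omega)
              + (kap J m * Fc c u (qf J (m-1)) m) * hJ3
        · rw [R3 c hc3 hc31 hc32, hB (u+1), hC (u+1)]; ring
      · -- P top value
        rw [hextP, hp3, R2 c hc3 hc31 hc32, hA m, hC (m+1), pO m (by omega) (by omega),
          Dv_m0]
        linear_combination kap J m * qH' + hkapH
          + (kap J m * Fc c m (qf J (m-1)) m) * hJ3
      · -- P bottom value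
        rw [hextP, hp3, R1' c hc3 hc31 hc32 _ _ _ 0 (m+1) 0 (by norm_num),
          hA 0, hB 0, pE, Ev_m0]
        ring
      · -- Q orthogonality
        intro n h1 h2
        rw [hextQ n, hextQ (n+1), hq3]
        obtain ⟨u, hu⟩ : ∃ u, n = 3*u ∨ n = 3*u+1 ∨ n = 3*u+2 := ⟨n/3, by omega⟩
        rcases hu with rfl | rfl | rfl
        · rw [R1 c hc3 hc31 hc32, R2 c hc3 hc31 hc32,
            hA u, hC u, Fc_zero, pO u (by omega) (by omega)]
          linear_combination (kap J m * Fc c u (qf J (m-1)) m) * (hJ2 + hJ3)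
        · rw [R2 c hc3 hc31 hc32, R3' c hc3 hc31 hc32 _ _ _ u (m+1) (3*u+1+1) (by ring),
            hA u, hC (u+1), Fc_zero]
          rcases Nat.eq_zero_or_pos u with rfl | hu0
          · rw [pE]
            linear_combination kap J m * qG' + hkey
              + (kap J m * Fc c 0 (qf J (m-1)) m) * hJ3
          · rw [pO u (by omega) (by omega)]
            linear_combination kap J m * qO' u (by omega) (by omega)
              + (kap J m * Fc c u (qf J (m-1)) m) * hJ3
        · rw [R3 c hc3 hc31 hc32, R1' c hc3 hc31 hc32 _ _ _ (u+1) (m+1) (3*u+2+1) (by ring),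
            hA (u+1), hC (u+1), Fc_zero, pO (u+1) (by omega) (by omega)]
          linear_combination (kap J m * Fc c (u+1) (qf J (m-1)) m) * hJ2
      · -- Q top value
        rw [hextQ, hextQ, hq3, R2 c hc3 hc31 hc32, R3 c hc3 hc31 hc32,
          hA m, hC (m+1), Fc_zero, pO m (by omega) (by omega), Hv_m0]
        linear_combination kap J m * qH' + hkapH + (kap J m * Fc c m (qf J (m-1)) m) * hJ3
      · -- Q bottom value
        rw [hextQ, hextQ, hq3, R1' c hc3 hc31 hc32 _ _ _ 0 (m+1) 0 (by norm_num),
          R2' c hc3 hc31 hc32 _ _ _ 0 (m+1) 1 (by norm_num),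
          hA 0, hC 0, Fc_zero, pE, Gv_m0]
        linear_combination (Ev J m + kap J m * Fc c 0 (qf J (m-1)) m) * hJ2
          + (kap J m * Fc c 0 (qf J (m-1)) m) * hJ3
  · -- case k = 3m+1
    obtain ⟨pS, pM, qS, qM, pO, pD, pE, qO, qH, qG⟩ := IH m (by omega)
    have hDne : Dv J m ≠ 0 := by
      rcases (psi hJ2 m).1 with h | h <;> rw [h]
      · exact Jne hJ2
      · exact pow_ne_zero _ (Jne hJ2)
    have hI1 : Gv J m * Dv J m = -Ev J m := (psi hJ2 m).2.2.2.2.1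
    have hlamD : lam J m * Dv J m = J^2 := by rw [lam]; field_simp
    have hkey2 : J * lam J m * Ev J m + Gv J m = 0 := by
      rw [lam]; field_simp; linear_combination hI1 + Ev J m * hJ3
    have hlamE : lam J m * Ev J m = -J^2 * Gv J m := by
      rw [lam]; field_simp; linear_combination J^2 * hI1
    have hp3 : pf J (3*m+1) = tri (fun _ => 0) (pf J m) (fun _ => 0) := by
      rw [pf, pq_m1 m]
    have hq3 : qf J (3*m+1) = tri (fun t => lam J m * pf J m t + J^2 * qf J m t)
        (qf J m) (fun _ => 0) := by
      rw [qf, pq_m1 m]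
    have hsuppP : ∀ j, 3*m+1 < j → pf J (3*m+1) j = 0 := by
      intro j hj; rw [hp3]
      obtain ⟨t, ht⟩ : ∃ t, j = 3*t ∨ j = 3*t+1 ∨ j = 3*t+2 := ⟨j/3, by omega⟩
      rcases ht with rfl | rfl | rfl
      · rw [tri0]
      · rw [tri1, pS t (by omega)]
      · rw [tri2]
    have hsuppQ : ∀ j, 3*m+1 < j → qf J (3*m+1) j = 0 := by
      intro j hj; rw [hq3]
      obtain ⟨t, ht⟩ : ∃ t, j = 3*t ∨ j = 3*t+1 ∨ j = 3*t+2 := ⟨j/3, by omega⟩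
      rcases ht with rfl | rfl | rfl
      · rw [tri0, pS t (by omega), qS t (by omega)]; ring
      · rw [tri1, qS t (by omega)]
      · rw [tri2]
    have hextP : ∀ u, Fc c u (pf J (3*m+1)) (3*m+1+1) = Fc c u (pf J (3*m+1)) (3*(m+1)) :=
      fun u => (Fc_ext c u _ (by omega) (fun t ht => hsuppP t (by omega))).symm
    have hextQ : ∀ u, Fc c u (qf J (3*m+1)) (3*m+1+1) = Fc c u (qf J (3*m+1)) (3*(m+1)) :=
      fun u => (Fc_ext c u _ (by omega) (fun t ht => hsuppQ t (by omega))).symm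
    have hA1 : ∀ u, Fc c u (fun t => lam J m * pf J m t + J^2 * qf J m t) (m+1)
        = lam J m * Fc c u (pf J m) (m+1) + J^2 * Fc c u (qf J m) (m+1) := by
      intro u; rw [Fc_add, Fc_smul, Fc_smul]
    refine ⟨hsuppP, ?_, hsuppQ, ?_, ?_, ?_, ?_, ?_, ?_, ?_⟩
    · rw [hp3, tri1, pM]
    · rw [hq3, tri1, qM]
    · intro n h1 h2
      rw [hextP n, hp3]
      obtain ⟨u, hu⟩ : ∃ u, n = 3*u ∨ n = 3*u+1 ∨ n = 3*u+2 := ⟨n/3, by omega⟩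
      rcases hu with rfl | rfl | rfl
      · rw [R1 c hc3 hc31 hc32, Fc_zero, pO u (by omega) (by omega)]; ring
      · rw [R2 c hc3 hc31 hc32, Fc_zero, Fc_zero]; ring
      · rw [R3 c hc3 hc31 hc32, Fc_zero, pO (u+1) (by omega) (by omega)]; ring
    · rw [hextP, hp3, R3' c hc3 hc31 hc32 _ _ _ m (m+1) (3*m+1+1) (by ring),
        Fc_zero, pD, Dv_m1]
      ring
    · rw [hextP, hp3, R1' c hc3 hc31 hc32 _ _ _ 0 (m+1) 0 (by norm_num),
        Fc_zero, pE, Ev_m1]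
      ring
    · intro n h1 h2
      rw [hextQ n, hextQ (n+1), hq3]
      obtain ⟨u, hu⟩ : ∃ u, n = 3*u ∨ n = 3*u+1 ∨ n = 3*u+2 := ⟨n/3, by omega⟩
      rcases hu with rfl | rfl | rfl
      · rw [R1 c hc3 hc31 hc32, R2 c hc3 hc31 hc32, hA1 u, Fc_zero,
          pO u (by omega) (by omega)]
        linear_combination (Fc c u (qf J m) (m+1)) * (hJ2 + hJ3)
      · rw [R2 c hc3 hc31 hc32, R3' c hc3 hc31 hc32 _ _ _ u (m+1) (3*u+1+1) (by ring),
          hA1 u, Fc_zero]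
        rcases Nat.eq_zero_or_pos u with rfl | hu0
        · rw [pE]
          linear_combination hkey2 + qG + (Fc c 0 (qf J m) (m+1)) * hJ3
        · rw [pO u (by omega) (by omega)]
          linear_combination qO u (by omega) (by omega) + (Fc c u (qf J m) (m+1)) * hJ3
      · rw [R3 c hc3 hc31 hc32, R1' c hc3 hc31 hc32 _ _ _ (u+1) (m+1) (3*u+2+1) (by ring),
          hA1 (u+1), Fc_zero, pO (u+1) (by omega) (by omega)]
        linear_combination (Fc c (u+1) (qf J m) (m+1)) * hJ2
    · rw [hextQ, hextQ, hq3, R3' c hc3 hc31 hc32 _ _ _ m (m+1) (3*m+1+1) (by ring),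
        R1' c hc3 hc31 hc32 _ _ _ (m+1) (m+1) (3*m+1+2) (by ring),
        hA1 (m+1), Fc_zero, pD, Hv_m1]
      linear_combination hlamD + (Fc c (m+1) (qf J m) (m+1)) * hJ2
    · rw [hextQ, hextQ, hq3, R1' c hc3 hc31 hc32 _ _ _ 0 (m+1) 0 (by norm_num),
        R2' c hc3 hc31 hc32 _ _ _ 0 (m+1) 1 (by norm_num),
        hA1 0, Fc_zero, pE, Gv_m1]
      linear_combination (1+J) * hlamE + (Fc c 0 (qf J m) (m+1) - Gv J m) * (hJ2 + hJ3)
  · -- case k = 3m+2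
    obtain ⟨pS, pM, qS, qM, pO, pD, pE, qO, qH, qG⟩ := IH m (by omega)
    have hDne : Dv J m ≠ 0 := by
      rcases (psi hJ2 m).1 with h | h <;> rw [h]
      · exact Jne hJ2
      · exact pow_ne_zero _ (Jne hJ2)
    have hI1 : Gv J m * Dv J m = -Ev J m := (psi hJ2 m).2.2.2.2.1
    have hlamD : lam J m * Dv J m = J^2 := by rw [lam]; field_simp
    have hkey2 : J * lam J m * Ev J m + Gv J m = 0 := by
      rw [lam]; field_simp; linear_combination hI1 + Ev J m * hJ3
    have hlamE : lam J m * Ev J m = -J^2 * Gv J m := by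
      rw [lam]; field_simp; linear_combination J^2 * hI1
    have hp3 : pf J (3*m+2) = tri (fun t => lam J m * pf J m t + J^2 * qf J m t)
        (fun t => -J * qf J m t) (qf J m) := by
      rw [pf, pq_m2 m]
    have hq3 : qf J (3*m+2) = tri (fun _ => 0) (fun t => J^2 * qf J m t) (qf J m) := by
      rw [qf, pq_m2 m]
    have e1 : 3*m+2+1 = 3*(m+1) := by ring
    have hsuppP : ∀ j, 3*m+2 < j → pf J (3*m+2) j = 0 := by
      intro j hj; rw [hp3]
      obtain ⟨t, ht⟩ : ∃ t, j = 3*t ∨ j = 3*t+1 ∨ j = 3*t+2 := ⟨j/3, by omega⟩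
      rcases ht with rfl | rfl | rfl
      · rw [tri0, pS t (by omega), qS t (by omega)]; ring
      · rw [tri1, qS t (by omega)]; ring
      · rw [tri2, qS t (by omega)]
    have hsuppQ : ∀ j, 3*m+2 < j → qf J (3*m+2) j = 0 := by
      intro j hj; rw [hq3]
      obtain ⟨t, ht⟩ : ∃ t, j = 3*t ∨ j = 3*t+1 ∨ j = 3*t+2 := ⟨j/3, by omega⟩
      rcases ht with rfl | rfl | rfl
      · rw [tri0]
      · rw [tri1, qS t (by omega)]; ring
      · rw [tri2, qS t (by omega)]
    have hA1 : ∀ u, Fc c u (fun t => lam J m * pf J m t + J^2 * qf J m t) (m+1)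
        = lam J m * Fc c u (pf J m) (m+1) + J^2 * Fc c u (qf J m) (m+1) := by
      intro u; rw [Fc_add, Fc_smul, Fc_smul]
    have hB2 : ∀ u, Fc c u (fun t => -J * qf J m t) (m+1)
        = -J * Fc c u (qf J m) (m+1) := fun u => Fc_smul c u _ _ _
    have hC2 : ∀ u, Fc c u (fun t => J^2 * qf J m t) (m+1)
        = J^2 * Fc c u (qf J m) (m+1) := fun u => Fc_smul c u _ _ _
    refine ⟨hsuppP, ?_, hsuppQ, ?_, ?_, ?_, ?_, ?_, ?_, ?_⟩
    · rw [hp3, tri2, qM]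
    · rw [hq3, tri2, qM]
    · intro n h1 h2
      rw [e1, hp3]
      obtain ⟨u, hu⟩ : ∃ u, n = 3*u ∨ n = 3*u+1 ∨ n = 3*u+2 := ⟨n/3, by omega⟩
      rcases hu with rfl | rfl | rfl
      · rw [R1 c hc3 hc31 hc32, hA1 u, hB2 u, pO u (by omega) (by omega)]; ring
      · rw [R2 c hc3 hc31 hc32, hA1 u]
        rcases Nat.eq_zero_or_pos u with rfl | hu0
        · rw [pE]
          linear_combination hkey2 + qG + (Fc c 0 (qf J m) (m+1)) * hJ3
        · rw [pO u (by omega) (by omega)]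
          linear_combination qO u (by omega) (by omega) + (Fc c u (qf J m) (m+1)) * hJ3
      · rw [R3 c hc3 hc31 hc32, hB2 (u+1)]; ring
    · rw [e1, hp3, R1 c hc3 hc31 hc32, hA1 (m+1), hB2 (m+1), pD, Dv_m2]
      linear_combination hlamD
    · rw [e1, hp3, R1' c hc3 hc31 hc32 _ _ _ 0 (m+1) 0 (by norm_num),
        hA1 0, hB2 0, pE, Ev_m2]
      linear_combination hlamE
    · intro n h1 h2
      rw [e1, hq3]
      obtain ⟨u, hu⟩ : ∃ u, n = 3*u ∨ n = 3*u+1 ∨ n = 3*u+2 := ⟨n/3, by omega⟩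
      rcases hu with rfl | rfl | rfl
      · rw [R1 c hc3 hc31 hc32, R2 c hc3 hc31 hc32, Fc_zero, hC2 u]
        linear_combination qO u (by omega) (by omega) + (Fc c u (qf J m) (m+1)) * hJ3
      · rw [R2 c hc3 hc31 hc32, R3' c hc3 hc31 hc32 _ _ _ u (m+1) (3*u+1+1) (by ring),
          Fc_zero, hC2 (u+1)]
        linear_combination (Fc c (u+1) (qf J m) (m+1)) * hJ2
      · rw [R3 c hc3 hc31 hc32, R1' c hc3 hc31 hc32 _ _ _ (u+1) (m+1) (3*u+2+1) (by ring),
          Fc_zero, hC2 (u+1)]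
        linear_combination (Fc c (u+1) (qf J m) (m+1)) * (hJ2 + hJ3)
    · rw [e1, show 3*m+2+2 = 3*(m+1)+1 by ring, hq3, R1 c hc3 hc31 hc32,
        R2 c hc3 hc31 hc32, Fc_zero, hC2 (m+1), show m+1+1 = m+2 by ring, Hv_m2]
      linear_combination qH + (Fc c (m+1) (qf J m) (m+1)) * hJ3
    · rw [e1, hq3, R1' c hc3 hc31 hc32 _ _ _ 0 (m+1) 0 (by norm_num),
        R2' c hc3 hc31 hc32 _ _ _ 0 (m+1) 1 (by norm_num),
        Fc_zero, hC2 0, Gv_m2]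
      linear_combination qG + (Fc c 0 (qf J m) (m+1)) * hJ3

/-- the Hankel determinant as a product of the `Dv` values -/
theorem det_formula (n : ℕ) :
    (Hmat c 1 n).det = ∏ k ∈ Finset.range n, Dv J k := by
  classical
  set U : Matrix (Fin n) (Fin n) ℂ := Matrix.of fun i k => pf J (k : ℕ) (i : ℕ) with hUdef
  have hU : U.BlockTriangular id := by
    intro i k hik
    show pf J (k : ℕ) (i : ℕ) = 0
    exact (master c hJ2 hc0 hc3 hc31 hc32 (k : ℕ)).1 _ hik
  have hdetU : U.det = 1 := by
    rw [Matrix.det_of_upperTriangular hU]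
    refine Finset.prod_eq_one fun i _ => ?_
    exact (master c hJ2 hc0 hc3 hc31 hc32 (i : ℕ)).2.1
  have hL : ∀ (i k : Fin n), (Hmat c 1 n * U) i k = Fc c ((i : ℕ)+1) (pf J (k : ℕ)) ((k : ℕ)+1) := by
    intro i k
    rw [Matrix.mul_apply]
    have e1 : ∀ j : Fin n, Hmat c 1 n i j * U j k = c ((i : ℕ)+1 + (j : ℕ)) * pf J (k : ℕ) (j : ℕ) := by
      intro j
      show c (1 + (i : ℕ) + (j : ℕ)) * pf J (k : ℕ) (j : ℕ) = _
      rw [show 1 + (i : ℕ) + (j : ℕ) = (i : ℕ) + 1 + (j : ℕ) by omega]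
    rw [Finset.sum_congr rfl (fun j _ => e1 j)]
    rw [Fin.sum_univ_eq_sum_range (fun j => c ((i : ℕ)+1 + j) * pf J (k : ℕ) j) n]
    exact Fc_ext c _ _ (by omega) (fun t ht => (master c hJ2 hc0 hc3 hc31 hc32 (k : ℕ)).1 t (by omega))
  have hLtri : (Hmat c 1 n * U).BlockTriangular OrderDual.toDual := by
    intro i k hik
    rw [hL i k]
    have hik' : (i : ℕ) < (k : ℕ) := hik
    exact (master c hJ2 hc0 hc3 hc31 hc32 (k : ℕ)).2.2.2.2.1 _ (by omega) (by omega)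
  have hdetL : (Hmat c 1 n * U).det = ∏ i : Fin n, Dv J (i : ℕ) := by
    rw [Matrix.det_of_lowerTriangular _ hLtri]
    refine Finset.prod_congr rfl fun i _ => ?_
    rw [hL i i]
    exact (master c hJ2 hc0 hc3 hc31 hc32 (i : ℕ)).2.2.2.2.2.1
  have := Matrix.det_mul (Hmat c 1 n) U
  rw [hdetL, hdetU, mul_one] at this
  rw [← this]
  exact Fin.prod_univ_eq_prod_range _ n

end Master

lemma prod_Dv_m0 {J : ℂ} (hJ2 : J^2 + J + 1 = 0) :
    ∀ n, ∏ k ∈ Finset.range (3*n), Dv J k = ∏ k ∈ Finset.range n, Dv J k := by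
  have hJ3 := J3 hJ2
  intro n
  induction n with
  | zero => simp
  | succ n IH =>
    rw [show 3*(n+1) = 3*n+1+1+1 by ring, Finset.prod_range_succ, Finset.prod_range_succ,
      Finset.prod_range_succ, IH, Dv_m0, Dv_m1, Dv_m2, Finset.prod_range_succ]
    linear_combination ((∏ k ∈ Finset.range n, Dv J k) * Dv J n) * hJ3

end Stmt17aux

open Stmt17aux in
theorem stmt17 (J : ℂ) (hJ : J = (Complex.I * Real.sqrt 3 - 1) / 2)
    (c : ℕ → ℂ) (hc0 : c 0 = 1)
    (hc3 : ∀ n, c (3 * n) = c n)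
    (hc31 : ∀ n, c (3 * n + 1) = J * c n)
    (hc32 : ∀ n, c (3 * n + 2) = 0) :
    (Hmat c 1 0).det = 1 ∧
    (∀ n : ℕ,
      (Hmat c 1 (3 * n)).det = (Hmat c 1 n).det ∧
      (Hmat c 1 (3 * n + 1)).det = J * (Hmat c 1 n).det ∧
      (Hmat c 1 (3 * n + 2)).det = J * (Hmat c 1 (n + 1)).det) := by
  have hs : ((Real.sqrt 3 : ℝ) : ℂ)^2 = 3 := by
    norm_cast
    rw [Real.sq_sqrt] <;> norm_num
  have hJ2 : J^2 + J + 1 = 0 := by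
    subst hJ
    linear_combination (((Real.sqrt 3 : ℝ) : ℂ)^2/4) * Complex.I_sq + (-1/4 : ℂ) * hs
  have hdf := det_formula c hJ2 hc0 hc3 hc31 hc32
  constructor
  · exact Matrix.det_isEmpty
  · intro n
    refine ⟨?_, ?_, ?_⟩
    · rw [hdf, hdf, prod_Dv_m0 hJ2]
    · rw [hdf, hdf, Finset.prod_range_succ, prod_Dv_m0 hJ2, Dv_m0, mul_comm]
    · rw [hdf, hdf, show 3*n+2 = 3*n+1+1 by ring, Finset.prod_range_succ,
        Finset.prod_range_succ, prod_Dv_m0 hJ2, Dv_m0, Dv_m1, Finset.prod_range_succ]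
      ring
end
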